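/- arXiv:0903.0277 — 6 statements merged into one kernel-verified Lean document; each statement's English description precedes it below -/
import Mathlib

section
/- For all integers 0 ≤ n1 ≤ n2, the number of Gessel walks of length 2n2 - n1 from the origin to (n1, n2) equals (n1+1)/(2n2-n1+1) · C(2n2-n1+1, n2+1). -/
open Finset

/-- The four Gessel steps: W, E, NE, SW. -/
def gstep : Fin 4 → ℤ × ℤ
  | 0 => (-1, 0)
  | 1 => (1, 0)
  | 2 => (1, 1)
  | 3 => (-1, -1)

/-- Position of the walk `w` after `j` steps. -/
def wpos (m : ℕ) (w : Fin m → Fin 4) (j : ℕ) : ℤ × ℤ :=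
  ∑ i : Fin m, if (i : ℕ) < j then gstep (w i) else 0

/-- `gesselF m n1 n2` : number of Gessel walks of length `m` from the origin to `(n1, n2)`
staying in the first quadrant. -/
noncomputable def gesselF (m : ℕ) (n1 n2 : ℤ) : ℕ :=
  Nat.card {w : Fin m → Fin 4 //
    (∀ j, 1 ≤ j → j ≤ m → 0 ≤ (wpos m w j).1 ∧ 0 ≤ (wpos m w j).2) ∧
    wpos m w m = (n1, n2)}

/-- Partial sum of a `±1` sequence. -/
def pSum (m : ℕ) (f : Fin m → ℤ) (j : ℕ) : ℤ :=
  ∑ i : Fin m, if (i : ℕ) < j then f i else 0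


/-- Number of `true`s among the first `j` entries. -/
def ct (m : ℕ) (f : Fin m → Bool) (j : ℕ) : ℕ :=
  ∑ i : Fin m, if (i : ℕ) < j ∧ f i = true then 1 else 0

def condB (m k : ℕ) (f : Fin m → Bool) : Prop :=
  (∀ j, j ≤ m → j ≤ 2 * ct m f j) ∧ ct m f m = k

instance (m k : ℕ) : DecidablePred (condB m k) := fun f => by
  unfold condB; infer_instance

def Bc (m k : ℕ) : ℕ := ∑ f : Fin m → Bool, if condB m k f then 1 else 0

lemma ct_snoc (m : ℕ) (g : Fin m → Bool) (b : Bool) (j : ℕ) :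
    ct (m + 1) (Fin.snoc g b) j = ct m g j + (if m < j ∧ b = true then 1 else 0) := by
  unfold ct
  rw [Fin.sum_univ_castSucc]
  simp [Fin.snoc_castSucc, Fin.snoc_last]

lemma ct_of_le (m : ℕ) (g : Fin m → Bool) {j : ℕ} (h : m ≤ j) : ct m g j = ct m g m := by
  unfold ct
  apply Finset.sum_congr rfl
  intro i _
  have hi : (i : ℕ) < m := i.isLt
  simp [hi, lt_of_lt_of_le hi h]

lemma Bc_eq_zero {m k : ℕ} (h : 2 * k < m) : Bc m k = 0 := by
  unfold Bc
  apply Finset.sum_eq_zero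
  intro f _
  rw [if_neg]
  rintro ⟨h1, h2⟩
  have := h1 m le_rfl
  omega

lemma snoc_bij (m : ℕ) :
    Function.Bijective (fun p : (Fin m → Bool) × Bool => (Fin.snoc p.1 p.2 : Fin (m+1) → Bool)) := by
  constructor
  · rintro ⟨g, b⟩ ⟨g', b'⟩ hgb
    have h1 := congrArg Fin.init hgb
    have h2 := congrArg (fun f => f (Fin.last m)) hgb
    simp only [Fin.init_snoc] at h1
    simp only [Fin.snoc_last] at h2
    exact Prod.ext h1 h2
  · intro f
    exact ⟨(Fin.init f, f (Fin.last m)), Fin.snoc_init_self f⟩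

lemma condB_snoc_true {m k : ℕ} (hk : 1 ≤ k) (h : m + 1 ≤ 2 * k) (g : Fin m → Bool) :
    condB (m + 1) k (Fin.snoc g true) ↔ condB m (k - 1) g := by
  unfold condB
  constructor
  · rintro ⟨h1, h2⟩
    rw [ct_snoc] at h2
    rw [ct_of_le m g (by omega)] at h2
    simp at h2
    constructor
    · intro j hj
      have := h1 j (by omega)
      rw [ct_snoc] at this
      have hnot : ¬ (m < j ∧ (true : Bool) = true) := by simp; omega
      rw [if_neg hnot, add_zero] at this
      exact this
    · omega
  · rintro ⟨h1, h2⟩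
    constructor
    · intro j hj
      rw [ct_snoc]
      rcases Nat.lt_or_ge m j with hmj | hmj
      · have hj' : j = m + 1 := by omega
        subst hj'
        rw [ct_of_le m g (by omega), h2]
        simp
        omega
      · have hnot : ¬ (m < j ∧ (true : Bool) = true) := by simp; omega
        rw [if_neg hnot, add_zero]
        exact h1 j hmj
    · rw [ct_snoc, ct_of_le m g (by omega), h2]
      simp
      omega

lemma condB_snoc_false {m k : ℕ} (h : m + 1 ≤ 2 * k) (g : Fin m → Bool) :
    condB (m + 1) k (Fin.snoc g false) ↔ condB m k g := by
  unfold condB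
  have hz : ∀ j : ℕ, (if m < j ∧ (false : Bool) = true then 1 else 0) = 0 := by simp
  constructor
  · rintro ⟨h1, h2⟩
    rw [ct_snoc, hz, add_zero, ct_of_le m g (by omega)] at h2
    exact ⟨fun j hj => by
      have := h1 j (by omega); rw [ct_snoc, hz, add_zero] at this; exact this, h2⟩
  · rintro ⟨h1, h2⟩
    constructor
    · intro j hj
      rw [ct_snoc, hz, add_zero]
      rcases Nat.lt_or_ge m j with hmj | hmj
      · have hj' : j = m + 1 := by omega
        subst hj'
        rw [ct_of_le m g (by omega), h2]
        omega
      · exact h1 j hmj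
    · rw [ct_snoc, hz, add_zero, ct_of_le m g (by omega)]
      exact h2

lemma Bc_rec {m k : ℕ} (hk : 1 ≤ k) (h : m + 1 ≤ 2 * k) :
    Bc (m + 1) k = Bc m (k - 1) + Bc m k := by
  unfold Bc
  rw [← Fintype.sum_bijective _ (snoc_bij m)
      (fun p => if condB (m+1) k (Fin.snoc p.1 p.2) then 1 else 0)
      (fun f => if condB (m+1) k f then 1 else 0) (fun p => rfl)]
  rw [Fintype.sum_prod_type]
  rw [← Finset.sum_add_distrib]
  apply Finset.sum_congr rfl
  intro g _
  rw [Fintype.sum_bool]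
  congr 1
  · rw [if_congr (condB_snoc_true hk h g) rfl rfl]
  · rw [if_congr (condB_snoc_false h g) rfl rfl]

lemma Bc_formula : ∀ m k : ℕ, m ≤ 2 * k → Bc m k + m.choose (k + 1) = m.choose k := by
  intro m
  induction m with
  | zero =>
    intro k _
    have h0 : Bc 0 k = if k = 0 then 1 else 0 := by
      rw [Bc, Fintype.sum_unique]
      have hc : condB 0 k (default : Fin 0 → Bool) ↔ k = 0 := by
        constructor
        · rintro ⟨-, h2⟩; simp [ct] at h2; omega
        · rintro rfl; exact ⟨fun j hj => by interval_cases j; simp, by simp [ct]⟩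
      exact if_congr hc rfl rfl
    rcases Nat.eq_zero_or_pos k with hk | hk
    · subst hk; simp [h0]
    · rw [h0, if_neg (by omega), Nat.choose_eq_zero_of_lt (by omega),
        Nat.choose_eq_zero_of_lt (by omega)]
  | succ m ih =>
    intro k hk
    obtain ⟨k', rfl⟩ : ∃ k', k = k' + 1 := ⟨k - 1, by omega⟩
    rw [Bc_rec (by omega) hk]
    simp only [Nat.add_sub_cancel]
    have ih1 := ih (k' + 1) (by omega)
    rw [Nat.choose_succ_succ' m (k' + 1), Nat.choose_succ_succ' m k']
    rcases Nat.lt_or_ge (2 * k') m with hlt | hge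
    · -- m = 2k' + 1 (odd middle case)
      have hm : m = 2 * k' + 1 := by omega
      have hz : Bc m k' = 0 := Bc_eq_zero hlt
      have hsym : m.choose (k' + 1) = m.choose k' := by
        rw [hm]; exact Nat.choose_symm_half k'
      omega
    · have ih0 := ih k' hge
      omega

def toB (m : ℕ) (w : Fin m → Fin 4) : Fin m → Bool := fun i => decide (w i = 2)

def toW (m : ℕ) (f : Fin m → Bool) : Fin m → Fin 4 := fun i => if f i then 2 else 0

lemma toW_toB (m : ℕ) (w : Fin m → Fin 4) (h02 : ∀ i, w i = 0 ∨ w i = 2) :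
    toW m (toB m w) = w :=
  funext fun i => by rcases h02 i with hcase | hcase <;> simp [toW, toB, hcase]

lemma toB_toW (m : ℕ) (f : Fin m → Bool) : toB m (toW m f) = f :=
  funext fun i => by cases hb : f i <;> simp [toW, toB, hb]

lemma filter_lt_card (m j : ℕ) (hj : j ≤ m) :
    (univ.filter (fun i : Fin m => (i : ℕ) < j)).card = j := by
  have hset : univ.filter (fun i : Fin m => (i : ℕ) < j)
      = Finset.map (Fin.castLEEmb hj) univ := by
    ext i
    simp only [mem_filter, mem_univ, true_and, Finset.mem_map]
    constructor
    · intro hi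
      exact ⟨⟨i, hi⟩, by simp [Fin.castLEEmb, Fin.ext_iff]⟩
    · rintro ⟨a, rfl⟩
      simpa [Fin.castLEEmb] using a.isLt
  rw [hset, Finset.card_map, Finset.card_univ, Fintype.card_fin]

lemma sum_ite_lt (m j : ℕ) (hj : j ≤ m) :
    ∑ i : Fin m, (if (i : ℕ) < j then (1 : ℤ) else 0) = j := by
  rw [Finset.sum_boole, filter_lt_card m j hj]

lemma ct_cast (m : ℕ) (f : Fin m → Bool) (j : ℕ) :
    ((ct m f j : ℕ) : ℤ) = ∑ i : Fin m, (if (i : ℕ) < j ∧ f i = true then (1 : ℤ) else 0) := by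
  unfold ct
  push_cast
  rfl

lemma wpos_toW (m : ℕ) (f : Fin m → Bool) (j : ℕ) (hj : j ≤ m) :
    wpos m (toW m f) j = (2 * (ct m f j : ℤ) - (j : ℤ), (ct m f j : ℤ)) := by
  unfold wpos
  have hstep : ∀ i : Fin m, gstep (toW m f i)
      = if f i = true then ((1 : ℤ), (1 : ℤ)) else (-1, 0) := by
    intro i
    unfold toW
    cases f i <;> simp [gstep]
  apply Prod.ext
  · rw [Prod.fst_sum]
    have hterm : ∀ i : Fin m, (if (i : ℕ) < j then gstep (toW m f i) else 0).1
        = 2 * (if (i : ℕ) < j ∧ f i = true then (1 : ℤ) else 0)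
          - (if (i : ℕ) < j then (1 : ℤ) else 0) := by
      intro i
      rw [hstep i]
      by_cases h1 : (i : ℕ) < j <;> by_cases h2 : f i = true <;> simp [h1, h2]
    rw [Finset.sum_congr rfl fun i _ => hterm i, Finset.sum_sub_distrib, ← Finset.mul_sum,
      sum_ite_lt m j hj, ← ct_cast]
  · rw [Prod.snd_sum]
    have hterm : ∀ i : Fin m, (if (i : ℕ) < j then gstep (toW m f i) else 0).2
        = (if (i : ℕ) < j ∧ f i = true then (1 : ℤ) else 0) := by
      intro i
      rw [hstep i]
      by_cases h1 : (i : ℕ) < j <;> by_cases h2 : f i = true <;> simp [h1, h2]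
    rw [Finset.sum_congr rfl fun i _ => hterm i, ← ct_cast]

lemma steps02 (m : ℕ) (w : Fin m → Fin 4) (a b : ℤ) (hend : wpos m w m = (a, b))
    (hm : (m : ℤ) = 2 * b - a) : ∀ i, w i = 0 ∨ w i = 2 := by
  have hw : wpos m w m = ∑ i : Fin m, gstep (w i) := by
    unfold wpos
    exact Finset.sum_congr rfl fun i _ => if_pos i.isLt
  have h1 : ∑ i : Fin m, (gstep (w i)).1 = a := by rw [← Prod.fst_sum, ← hw, hend]
  have h2 : ∑ i : Fin m, (gstep (w i)).2 = b := by rw [← Prod.snd_sum, ← hw, hend]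
  have key : ∀ k : Fin 4, 2 * (gstep k).2 - (gstep k).1 + 1
      = if (k = 0 ∨ k = 2) then 2 else 0 := by decide
  have hT : ∑ i : Fin m, (if (w i = 0 ∨ w i = 2) then (2 : ℤ) else 0) = 2 * m := by
    rw [← Finset.sum_congr rfl fun i _ => key (w i), Finset.sum_add_distrib,
      Finset.sum_sub_distrib, ← Finset.mul_sum, h1, h2]
    simp only [Finset.sum_const, Finset.card_univ, Fintype.card_fin, nsmul_eq_mul, mul_one]
    omega
  have h2' : ∀ i : Fin m, (if (w i = 0 ∨ w i = 2) then (2 : ℤ) else 0)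
      = 2 * (if (w i = 0 ∨ w i = 2) then 1 else 0) := fun i => by split <;> ring
  rw [Finset.sum_congr rfl fun i _ => h2' i, ← Finset.mul_sum, Finset.sum_boole] at hT
  have hcard : (univ.filter (fun i : Fin m => w i = 0 ∨ w i = 2)).card = m := by omega
  have huniv := (Finset.card_eq_iff_eq_univ _).mp (by rw [hcard, Fintype.card_fin])
  intro i
  have hmem := Finset.eq_univ_iff_forall.mp huniv i
  simpa using (Finset.mem_filter.mp hmem).2

lemma gesselF_eq_Bc (n1 n2 : ℕ) (h : n1 ≤ n2) :
    gesselF (2 * n2 - n1) (n1 : ℤ) (n2 : ℤ) = Bc (2 * n2 - n1) n2 := by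
  set m := 2 * n2 - n1 with hmdef
  have hm : (m : ℤ) = 2 * (n2 : ℤ) - (n1 : ℤ) := by omega
  have hiff : ∀ f : Fin m → Bool,
      ((∀ j, 1 ≤ j → j ≤ m → 0 ≤ (wpos m (toW m f) j).1 ∧ 0 ≤ (wpos m (toW m f) j).2) ∧
        wpos m (toW m f) m = ((n1 : ℤ), (n2 : ℤ))) ↔ condB m n2 f := by
    intro f
    constructor
    · rintro ⟨hpre, hend⟩
      rw [wpos_toW m f m le_rfl] at hend
      have hct : ct m f m = n2 := by
        have h2 := congrArg Prod.snd hend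
        simp only at h2
        exact_mod_cast h2
      refine ⟨fun j hj => ?_, hct⟩
      rcases Nat.eq_zero_or_pos j with rfl | hj1
      · omega
      · have h1 := (hpre j hj1 hj).1
        rw [wpos_toW m f j hj] at h1
        simp only at h1
        omega
    · rintro ⟨h1, h2⟩
      constructor
      · intro j hj1 hj
        rw [wpos_toW m f j hj]
        have := h1 j hj
        constructor
        · simp only
          omega
        · simp only
          positivity
      · rw [wpos_toW m f m le_rfl, h2]
        have he : 2 * ((n2 : ℕ) : ℤ) - (m : ℤ) = (n1 : ℤ) := by omega
        rw [Prod.mk.injEq]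
        exact ⟨he, rfl⟩
  have e : {w : Fin m → Fin 4 //
      (∀ j, 1 ≤ j → j ≤ m → 0 ≤ (wpos m w j).1 ∧ 0 ≤ (wpos m w j).2) ∧
      wpos m w m = ((n1 : ℤ), (n2 : ℤ))} ≃ {f : Fin m → Bool // condB m n2 f} :=
    { toFun := fun w => ⟨toB m w.1, (hiff (toB m w.1)).mp (by
        rw [toW_toB m w.1 (steps02 m w.1 _ _ w.2.2 hm)]; exact w.2)⟩
      invFun := fun f => ⟨toW m f.1, (hiff f.1).mpr f.2⟩
      left_inv := fun w => Subtype.ext (toW_toB m w.1 (steps02 m w.1 _ _ w.2.2 hm))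
      right_inv := fun f => Subtype.ext (toB_toW m f.1) }
  unfold gesselF
  rw [Nat.card_congr e, Nat.card_eq_fintype_card, Fintype.card_subtype]
  unfold Bc
  rw [Finset.sum_boole, Nat.cast_id]

theorem gessel_minimal_vertical (n1 n2 : ℕ) (h : n1 ≤ n2) :
    (2 * n2 - n1 + 1) * gesselF (2 * n2 - n1) (n1 : ℤ) (n2 : ℤ) =
      (n1 + 1) * (2 * n2 - n1 + 1).choose (n2 + 1) := by
  rw [gesselF_eq_Bc n1 n2 h]
  set m := 2 * n2 - n1 with hmdef
  have hf := Bc_formula m n2 (by omega)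
  have hmul : (m + 1) * Bc m n2 + (m + 1) * m.choose (n2 + 1) = (m + 1) * m.choose n2 := by
    rw [← Nat.mul_add, hf]
  have e1 : (m + 1) * m.choose n2 = (m + 1).choose (n2 + 1) * (n2 + 1) :=
    Nat.add_one_mul_choose_eq m n2
  have e2 : (m + 1) * m.choose (n2 + 1) = (m + 1).choose (n2 + 2) * (n2 + 2) :=
    Nat.add_one_mul_choose_eq m (n2 + 1)
  have e3 : (m + 1).choose (n2 + 2) * (n2 + 2) = (m + 1).choose (n2 + 1) * ((m + 1) - (n2 + 1)) :=
    Nat.choose_succ_right_eq (m + 1) (n2 + 1)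
  have e4 : (m + 1) - (n2 + 1) = n2 - n1 := by omega
  have e5 : n2 + 1 = (n2 - n1) + (n1 + 1) := by omega
  rw [e2, e3, e4, e1] at hmul
  have e6 : (m + 1).choose (n2 + 1) * (n2 + 1)
      = (m + 1).choose (n2 + 1) * (n2 - n1) + (m + 1).choose (n2 + 1) * (n1 + 1) := by
    rw [← Nat.mul_add, ← e5]
  rw [e6] at hmul
  have final : (m + 1) * Bc m n2 = (m + 1).choose (n2 + 1) * (n1 + 1) := by linarith
  rw [final, Nat.mul_comm]
end

section
/- For m ≥ 0, n1 ∈ ℤ, n2 ≥ 0 with m ≡ n1 (mod 2) and |n1| ≤ m and (m-n1)/2 + n2 ≤ m, the number of pairs of sequences (ξ_i, η_i)_{i=1}^m with ξ_i, η_i ∈ {-1,1}, partial sums S_j = ξ_1+...+ξ_j and T_j = η_1+...+η_j satisfying S_j ≥ T_j for all 1 ≤ j ≤ m, S_m = n1, T_m = n1 - 2n2, equals ((n2+1)/(m+1)) · C(m+1, (m-n1)/2) · C(m+1, (m-n1)/2 + n2 + 1). -/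
open Finset

namespace NC

def v (b : Bool) : ℤ := if b then 1 else -1

def bS (m : ℕ) (f : Fin m → Bool) (j : ℕ) : ℤ :=
  ∑ i : Fin m, if (i : ℕ) < j then v (f i) else 0

lemma bS_zero (m : ℕ) (f : Fin m → Bool) : bS m f 0 = 0 := by simp [bS]

lemma bS_succ (m : ℕ) (f : Fin m → Bool) (j : ℕ) (hj : j < m) :
    bS m f (j+1) = bS m f j + v (f ⟨j, hj⟩) := by
  have key : ∀ i : Fin m, (if (i:ℕ) < j+1 then v (f i) else 0)
      = (if (i:ℕ) < j then v (f i) else 0) + (if i = ⟨j,hj⟩ then v (f i) else 0) := by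
    intro i
    rcases lt_trichotomy (i:ℕ) j with h|h|h
    · have h1 : (i:ℕ) < j + 1 := by omega
      have h2 : i ≠ ⟨j,hj⟩ := by simp [Fin.ext_iff]; omega
      simp [h, h1, h2]
    · have h2 : i = ⟨j,hj⟩ := by simp [Fin.ext_iff]; omega
      simp [h, h2]
    · have h1 : ¬ ((i:ℕ) < j + 1) := by omega
      have h2 : i ≠ ⟨j,hj⟩ := by simp [Fin.ext_iff]; omega
      have h3 : ¬ ((i:ℕ) < j) := by omega
      simp [h1, h3, h2]
  rw [bS, Finset.sum_congr rfl (fun i _ => key i), Finset.sum_add_distrib]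
  simp [bS]

lemma bS_stable (m : ℕ) (f : Fin m → Bool) (j : ℕ) (hj : m ≤ j) : bS m f j = bS m f m := by
  apply Finset.sum_congr rfl
  intro i _
  have := i.2
  simp [Nat.lt_of_lt_of_le i.2 hj, i.2]

lemma even_D (m : ℕ) (f g : Fin m → Bool) (j : ℕ) : Even (bS m g j - bS m f j) := by
  induction j with
  | zero => simp [bS_zero]
  | succ j ih =>
    by_cases hj : j < m
    · rw [bS_succ _ _ _ hj, bS_succ _ _ _ hj]
      have h2 : Even (v (g ⟨j,hj⟩) - v (f ⟨j,hj⟩)) := by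
        cases hb : g ⟨j,hj⟩ <;> cases hc : f ⟨j,hj⟩ <;> simp [v]
      have := ih.add h2
      have e : bS m g j + v (g ⟨j,hj⟩) - (bS m f j + v (f ⟨j,hj⟩))
          = bS m g j - bS m f j + (v (g ⟨j,hj⟩) - v (f ⟨j,hj⟩)) := by ring
      rw [e]; exact this
    · rw [bS_stable m f (j+1) (by omega), bS_stable m g (j+1) (by omega),
        ← bS_stable m f j (by omega), ← bS_stable m g j (by omega)]
      exact ih

lemma v_le (b : Bool) : -1 ≤ v b ∧ v b ≤ 1 := by cases b <;> simp [v]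

def negs (m : ℕ) (f : Fin m → Bool) : Finset (Fin m) := univ.filter (fun i => f i = false)

lemma bS_total (m : ℕ) (f : Fin m → Bool) : bS m f m = (m:ℤ) - 2 * (negs m f).card := by
  have key : ∀ i : Fin m, (if (i:ℕ) < m then v (f i) else 0)
      = 1 - 2 * (if f i = false then (1:ℤ) else 0) := by
    intro i
    cases h : f i <;> simp [i.2, v, h]
  rw [bS, Finset.sum_congr rfl (fun i _ => key i), Finset.sum_sub_distrib]
  rw [← Finset.mul_sum, Finset.sum_boole]
  simp [negs]

lemma bS_le (m : ℕ) (f : Fin m → Bool) : bS m f m ≤ m := by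
  rw [bS_total]
  have : (0:ℤ) ≤ (negs m f).card := by positivity
  omega


lemma card_single (m k : ℕ) :
    (univ.filter (fun f : Fin m → Bool => bS m f m = (m:ℤ) - 2*k)).card = m.choose k := by
  have hiff : ∀ f : Fin m → Bool, (bS m f m = (m:ℤ) - 2*k) ↔ (negs m f).card = k := by
    intro f
    rw [bS_total]
    constructor
    · intro h; omega
    · intro h; rw [h]
  rw [Finset.filter_congr (fun f _ => by rw [hiff f])]
  rw [show m.choose k = ((univ : Finset (Fin m)).card).choose k by simp,
    ← Finset.card_powersetCard k (univ : Finset (Fin m))]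
  apply Finset.card_bij' (fun f _ => negs m f) (fun s _ => fun i => decide (i ∉ s))
  · intro f hf
    simp only [Finset.mem_powersetCard]
    exact ⟨Finset.filter_subset _ _, (Finset.mem_filter.1 hf).2⟩
  · intro s hs
    simp only [Finset.mem_filter, Finset.mem_univ, true_and]
    have : negs m (fun i => decide (i ∉ s)) = s := by
      ext i; simp [negs]
    rw [this]
    exact (Finset.mem_powersetCard.1 hs).2
  · intro f hf
    funext i
    by_cases h : f i = false <;> simp [negs, h]
  · intro s hs
    ext i; simp [negs]

abbrev PP (m : ℕ) := (Fin m → Bool) × (Fin m → Bool)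

def D (m : ℕ) (p : PP m) (j : ℕ) : ℤ := bS m p.2 j - bS m p.1 j

def Cross (m : ℕ) (p : PP m) : Prop := ∃ j, j ≤ m ∧ D m p j = 2

instance (m : ℕ) : DecidablePred (Cross m) := fun p =>
  decidable_of_iff (∃ j : Fin (m+1), D m p (j:ℕ) = 2)
    ⟨fun ⟨j, h⟩ => ⟨j, Nat.lt_succ_iff.1 j.2, h⟩,
     fun ⟨j, hj, h⟩ => ⟨⟨j, Nat.lt_succ_iff.2 hj⟩, h⟩⟩

def jc (m : ℕ) (p : PP m) : ℕ := if h : Cross m p then Nat.find h else 0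

lemma jc_spec {m : ℕ} {p : PP m} (h : Cross m p) : jc m p ≤ m ∧ D m p (jc m p) = 2 := by
  rw [jc, dif_pos h]; exact Nat.find_spec h

lemma jc_min {m : ℕ} {p : PP m} (h : Cross m p) {j : ℕ} (hj : j < jc m p) :
    ¬(j ≤ m ∧ D m p j = 2) := by
  rw [jc, dif_pos h] at hj; exact Nat.find_min h hj

def Phi (m : ℕ) (p : PP m) : PP m :=
  (fun i => if (i:ℕ) < jc m p then p.1 i else p.2 i,
   fun i => if (i:ℕ) < jc m p then p.2 i else p.1 i)

lemma bS_mix_le (m : ℕ) (f g : Fin m → Bool) {j c : ℕ} (hj : j ≤ c) :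
    bS m (fun i => if (i:ℕ) < c then f i else g i) j = bS m f j := by
  apply Finset.sum_congr rfl
  intro i _
  by_cases h : (i:ℕ) < j
  · simp [h, lt_of_lt_of_le h hj]
  · simp [h]

lemma bS_mix_ge (m : ℕ) (f g : Fin m → Bool) {j c : ℕ} (hc : c ≤ j) :
    bS m (fun i => if (i:ℕ) < c then f i else g i) j = bS m f c + bS m g j - bS m g c := by
  have key : ∀ i : Fin m, (if (i:ℕ) < j then v (if (i:ℕ) < c then f i else g i) else 0)
      = ((if (i:ℕ) < c then v (f i) else 0) + (if (i:ℕ) < j then v (g i) else 0))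
        - (if (i:ℕ) < c then v (g i) else 0) := by
    intro i
    by_cases h1 : (i:ℕ) < c
    · have h2 : (i:ℕ) < j := lt_of_lt_of_le h1 hc
      simp [h1, h2]
    · by_cases h2 : (i:ℕ) < j <;> simp [h1, h2]
  rw [bS, Finset.sum_congr rfl (fun i _ => key i), Finset.sum_sub_distrib,
    Finset.sum_add_distrib]
  rfl

lemma D_phi_le {m : ℕ} (p : PP m) {j : ℕ} (hj : j ≤ jc m p) :
    D m (Phi m p) j = D m p j := by
  unfold D Phi
  rw [bS_mix_le m p.1 p.2 hj, bS_mix_le m p.2 p.1 hj]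

lemma jc_phi {m : ℕ} {p : PP m} (h : Cross m p) :
    Cross m (Phi m p) ∧ jc m (Phi m p) = jc m p := by
  obtain ⟨h1, h2⟩ := jc_spec h
  have hc : Cross m (Phi m p) := ⟨jc m p, h1, by rw [D_phi_le p le_rfl]; exact h2⟩
  refine ⟨hc, le_antisymm ?_ ?_⟩
  · rw [jc, dif_pos hc]
    exact Nat.find_le ⟨h1, by rw [D_phi_le p le_rfl]; exact h2⟩
  · by_contra hlt
    push_neg at hlt
    obtain ⟨h3, h4⟩ := jc_spec hc
    rw [D_phi_le p (le_of_lt hlt)] at h4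
    exact jc_min h hlt ⟨h3, h4⟩

lemma phi_phi {m : ℕ} {p : PP m} (h : Cross m p) : Phi m (Phi m p) = p := by
  have hj := (jc_phi h).2
  ext i
  · show (if (i:ℕ) < jc m (Phi m p) then (Phi m p).1 i else (Phi m p).2 i) = p.1 i
    rw [hj]
    by_cases hi : (i:ℕ) < jc m p <;> simp [Phi, hi]
  · show (if (i:ℕ) < jc m (Phi m p) then (Phi m p).2 i else (Phi m p).1 i) = p.2 i
    rw [hj]
    by_cases hi : (i:ℕ) < jc m p <;> simp [Phi, hi]

lemma phi_ends {m : ℕ} {p : PP m} (h : Cross m p) :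
    bS m (Phi m p).1 m = bS m p.2 m - 2 ∧ bS m (Phi m p).2 m = bS m p.1 m + 2 := by
  obtain ⟨h1, h2⟩ := jc_spec h
  have e2 : bS m p.2 (jc m p) = bS m p.1 (jc m p) + 2 := by
    have := h2; unfold D at this; omega
  constructor
  · show bS m (fun i => if (i:ℕ) < jc m p then p.1 i else p.2 i) m = _
    rw [bS_mix_ge m p.1 p.2 h1, e2]; ring
  · show bS m (fun i => if (i:ℕ) < jc m p then p.2 i else p.1 i) m = _
    rw [bS_mix_ge m p.2 p.1 h1, e2]; ring

lemma cross_of_ge {m : ℕ} {p : PP m} (hge : ∃ j, j ≤ m ∧ 2 ≤ D m p j) : Cross m p := by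
  classical
  obtain ⟨hm, hD⟩ := Nat.find_spec hge
  set j1 := Nat.find hge with hj1
  have hne : j1 ≠ 0 := by
    intro h0
    rw [h0] at hD
    unfold D at hD
    rw [bS_zero, bS_zero] at hD
    omega
  have hprev : ¬ (j1 - 1 ≤ m ∧ 2 ≤ D m p (j1 - 1)) := Nat.find_min hge (by omega)
  have hprev2 : D m p (j1 - 1) ≤ 1 := by
    by_contra hcon
    exact hprev ⟨by omega, by omega⟩
  have heven : Even (D m p (j1 - 1)) := even_D m p.1 p.2 _
  have hprev3 : D m p (j1 - 1) ≤ 0 := by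
    rcases heven with ⟨r, hr⟩
    omega
  have hstep : D m p j1 ≤ D m p (j1 - 1) + 2 := by
    have hj1m : j1 - 1 < m := by omega
    have e1 := bS_succ m p.1 (j1-1) hj1m
    have e2 := bS_succ m p.2 (j1-1) hj1m
    have hv1 := v_le (p.1 ⟨j1-1, hj1m⟩)
    have hv2 := v_le (p.2 ⟨j1-1, hj1m⟩)
    have hrw : j1 - 1 + 1 = j1 := by omega
    rw [hrw] at e1 e2
    unfold D
    rw [e1, e2]
    omega
  exact ⟨j1, hm, by omega⟩

def Good (m : ℕ) (p : PP m) : Prop := ∀ j, 1 ≤ j → j ≤ m → bS m p.2 j ≤ bS m p.1 j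

instance (m : ℕ) : DecidablePred (Good m) := fun p =>
  decidable_of_iff (∀ j : Fin (m+1), 1 ≤ (j:ℕ) → bS m p.2 (j:ℕ) ≤ bS m p.1 (j:ℕ))
    ⟨fun h j h1 h2 => h ⟨j, by omega⟩ h1,
     fun h j h1 => h (j:ℕ) h1 (by have := j.2; omega)⟩

lemma good_iff_not_cross (m : ℕ) (p : PP m) : Good m p ↔ ¬ Cross m p := by
  constructor
  · rintro hg ⟨j, hj, hD⟩
    have hj1 : 1 ≤ j := by
      by_contra h0
      have : j = 0 := by omega
      rw [this] at hD
      unfold D at hD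
      rw [bS_zero, bS_zero] at hD
      omega
    have := hg j hj1 hj
    unfold D at hD
    omega
  · intro hnc
    intro j h1 hj
    by_contra hcon
    push_neg at hcon
    have heven : Even (D m p j) := even_D m p.1 p.2 j
    have h2 : 2 ≤ D m p j := by
      rcases heven with ⟨r, hr⟩
      unfold D at hr ⊢
      omega
    exact hnc (cross_of_ge ⟨j, hj, h2⟩)

def ends (m : ℕ) (s t : ℤ) : Finset (PP m) :=
  univ.filter (fun p => bS m p.1 m = s ∧ bS m p.2 m = t)

lemma card_ends (m k l : ℕ) :
    (ends m ((m:ℤ) - 2*k) ((m:ℤ) - 2*l)).card = m.choose k * m.choose l := by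
  rw [ends, ← Finset.univ_product_univ,
    Finset.filter_product (fun f : Fin m → Bool => bS m f m = (m:ℤ) - 2*k)
      (fun g : Fin m → Bool => bS m g m = (m:ℤ) - 2*l),
    Finset.card_product, card_single, card_single]

lemma ends_empty (m : ℕ) (s t : ℤ) (ht : (m:ℤ) < t) : (ends m s t).card = 0 := by
  rw [Finset.card_eq_zero, Finset.eq_empty_iff_forall_notMem]
  intro p hp
  rw [ends, Finset.mem_filter] at hp
  have := bS_le m p.2
  omega

lemma card_cross (m : ℕ) (s t : ℤ) (hst : t ≤ s) :
    ((ends m s t).filter (Cross m)).card = (ends m (t-2) (s+2)).card := by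
  apply Finset.card_bij' (fun p _ => Phi m p) (fun q _ => Phi m q)
  · intro p hp
    rw [Finset.mem_filter] at hp
    obtain ⟨hpe, hpc⟩ := hp
    rw [ends, Finset.mem_filter] at hpe ⊢
    obtain ⟨e1, e2⟩ := phi_ends hpc
    exact ⟨Finset.mem_univ _, by rw [e1, hpe.2.2], by rw [e2, hpe.2.1]⟩
  · intro q hq
    rw [ends, Finset.mem_filter] at hq
    have hqc : Cross m q := by
      apply cross_of_ge ⟨m, le_rfl, ?_⟩
      unfold D
      rw [hq.2.1, hq.2.2]
      omega
    obtain ⟨e1, e2⟩ := phi_ends hqc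
    rw [Finset.mem_filter, ends, Finset.mem_filter]
    refine ⟨⟨Finset.mem_univ _, ?_, ?_⟩, (jc_phi hqc).1⟩
    · rw [e1, hq.2.2]; ring
    · rw [e2, hq.2.1]; ring
  · intro p hp
    exact phi_phi (Finset.mem_filter.1 hp).2
  · intro q hq
    rw [ends, Finset.mem_filter] at hq
    apply phi_phi
    apply cross_of_ge ⟨m, le_rfl, ?_⟩
    unfold D
    rw [hq.2.1, hq.2.2]
    omega

set_option maxHeartbeats 1000000 in
lemma count_main (m : ℕ) (s t : ℤ) (hst : t ≤ s) :
    (univ.filter (fun p : PP m => Good m p ∧ bS m p.1 m = s ∧ bS m p.2 m = t)).card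
      + (ends m (t-2) (s+2)).card = (ends m s t).card := by
  rw [← card_cross m s t hst]
  have hset : (univ.filter (fun p : PP m => Good m p ∧ bS m p.1 m = s ∧ bS m p.2 m = t))
      = (ends m s t).filter (fun p => ¬ Cross m p) := by
    ext p
    rw [Finset.mem_filter, Finset.mem_filter, ends, Finset.mem_filter]
    constructor
    · rintro ⟨hu, hg, he⟩
      exact ⟨⟨hu, he⟩, (good_iff_not_cross m p).1 hg⟩
    · rintro ⟨⟨hu, he⟩, hnc⟩
      exact ⟨hu, (good_iff_not_cross m p).2 hnc, he⟩
  rw [hset, add_comm]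
  exact Finset.card_filter_add_card_filter_not (fun p => Cross m p)

lemma arith (m b n2 : ℕ) (h2 : b + 1 + n2 ≤ m) :
    (m+1) * (m.choose (b+1) * m.choose (b+1+n2)) =
      (n2+1) * (m+1).choose (b+1) * (m+1).choose (b+1+n2+1)
        + (m+1) * (m.choose (b+n2+2) * m.choose b) := by
  have hb : b ≤ m := by omega
  have hbn : b + n2 + 1 ≤ m := by omega
  set A := m.choose (b+1)
  set A' := m.choose b
  set B := m.choose (b+n2+2)
  set B' := m.choose (b+n2+1)
  have e1 : (A:ℤ) * (b+1) = A' * ((m:ℤ) - b) := by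
    have h := Nat.choose_succ_right_eq m b
    have := congrArg (Nat.cast (R := ℤ)) h
    push_cast [Nat.cast_sub hb] at this
    linarith
  have e2 : (B:ℤ) * ((b:ℤ)+n2+2) = B' * ((m:ℤ) - b - n2 - 1) := by
    have h := Nat.choose_succ_right_eq m (b+n2+1)
    have := congrArg (Nat.cast (R := ℤ)) h
    push_cast [Nat.cast_sub hbn] at this
    have h3 : b+n2+1+1 = b+n2+2 := by omega
    rw [h3] at this
    push_cast at this
    linarith
  have hML : ((m:ℤ) - b) * ((b:ℤ)+n2+2) ≠ 0 := by
    have : (1:ℤ) ≤ (m:ℤ) - b := by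
      have : (b:ℤ) + 1 ≤ m := by exact_mod_cast (by omega : b + 1 ≤ m)
      linarith
    positivity
  have s1 : ((A':ℤ)+A) * ((m:ℤ)-(b:ℤ)) = A * ((m:ℤ)+1) := by linear_combination -e1
  have s2 : ((B':ℤ)+B) * ((b:ℤ)+(n2:ℤ)+2) = B' * ((m:ℤ)+1) := by linear_combination e2
  have s3 : (B:ℤ)*(A':ℤ) * (((m:ℤ)-(b:ℤ))*((b:ℤ)+(n2:ℤ)+2))
      = (A:ℤ)*((b:ℤ)+1)*(B':ℤ)*((m:ℤ)-(b:ℤ)-(n2:ℤ)-1) := by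
    linear_combination (-((B:ℤ)*((b:ℤ)+(n2:ℤ)+2)))*e1 + ((A:ℤ)*((b:ℤ)+1))*e2
  have key : ((m:ℤ)+1)*(A*B') * (((m:ℤ)-b)*((b:ℤ)+n2+2)) =
      (((n2:ℤ)+1)*((A':ℤ)+A)*((B':ℤ)+B) + ((m:ℤ)+1)*(B*A')) * (((m:ℤ)-b)*((b:ℤ)+n2+2)) := by
    linear_combination (-(((n2:ℤ)+1))*((B':ℤ)+B)*((b:ℤ)+(n2:ℤ)+2)) * s1
      + (-(((n2:ℤ)+1))*(A:ℤ)*((m:ℤ)+1)) * s2 + (-((m:ℤ)+1)) * s3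
  have main : ((m:ℤ)+1)*(A*B') = ((n2:ℤ)+1)*((A':ℤ)+A)*((B':ℤ)+B) + ((m:ℤ)+1)*(B*A') :=
    mul_right_cancel₀ hML key
  have p1 : (m+1).choose (b+1) = A' + A := Nat.choose_succ_succ m b
  have p2 : (m+1).choose (b+1+n2+1) = B' + B := by
    have : b+1+n2+1 = (b+n2+1)+1 := by omega
    rw [this]
    exact Nat.choose_succ_succ m (b+n2+1)
  have : b+1+n2 = b+n2+1 := by omega
  rw [p1, p2, this]
  exact_mod_cast main

lemma arith0 (m n2 : ℕ) (h2 : n2 ≤ m) :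
    (m+1) * (m.choose 0 * m.choose n2) = (n2+1) * (m+1).choose 0 * (m+1).choose (n2+1) := by
  have h := Nat.add_one_mul_choose_eq m n2
  rw [Nat.choose_zero_right, Nat.choose_zero_right, one_mul, mul_one, h, mul_comm]

def toZ (m : ℕ) (f : Fin m → Bool) : Fin m → ℤ := fun i => v (f i)

lemma pSum_toZ (m : ℕ) (f : Fin m → Bool) (j : ℕ) : pSum m (toZ m f) j = bS m f j := rfl

lemma bS_decide (m : ℕ) (f : Fin m → ℤ) (hf : ∀ i, f i = -1 ∨ f i = 1) (j : ℕ) :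
    bS m (fun i => decide (f i = 1)) j = pSum m f j := by
  apply Finset.sum_congr rfl
  intro i _
  rcases hf i with h|h <;> by_cases hij : (i:ℕ) < j <;> simp [v, h, hij]

lemma bridge (m : ℕ) (s t : ℤ) :
    Nat.card {p : (Fin m → ℤ) × (Fin m → ℤ) //
      (∀ i, p.1 i = -1 ∨ p.1 i = 1) ∧ (∀ i, p.2 i = -1 ∨ p.2 i = 1) ∧
      (∀ j, 1 ≤ j → j ≤ m → pSum m p.2 j ≤ pSum m p.1 j) ∧
      pSum m p.1 m = s ∧ pSum m p.2 m = t}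
    = (univ.filter (fun p : PP m => Good m p ∧ bS m p.1 m = s ∧ bS m p.2 m = t)).card := by
  rw [← Fintype.card_subtype]
  rw [← Nat.card_eq_fintype_card]
  apply Nat.card_congr
  refine ⟨fun x => ⟨(fun i => decide (x.1.1 i = 1), fun i => decide (x.1.2 i = 1)), ?_⟩,
    fun y => ⟨(toZ m y.1.1, toZ m y.1.2), ?_⟩, ?_, ?_⟩
  · obtain ⟨h1, h2, h3, h4, h5⟩ := x.2
    refine ⟨?_, ?_, ?_⟩
    · intro j hj1 hj2
      rw [bS_decide m x.1.1 h1, bS_decide m x.1.2 h2]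
      exact h3 j hj1 hj2
    · rw [bS_decide m x.1.1 h1]; exact h4
    · rw [bS_decide m x.1.2 h2]; exact h5
  · obtain ⟨hg, h4, h5⟩ := y.2
    refine ⟨fun i => ?_, fun i => ?_, ?_, ?_, ?_⟩
    · cases h : y.1.1 i <;> simp [toZ, v, h]
    · cases h : y.1.2 i <;> simp [toZ, v, h]
    · intro j hj1 hj2
      rw [pSum_toZ, pSum_toZ]
      exact hg j hj1 hj2
    · rw [pSum_toZ]; exact h4
    · rw [pSum_toZ]; exact h5
  · intro x
    apply Subtype.ext
    apply Prod.ext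
    · funext i
      rcases x.2.1 i with h|h <;> simp [toZ, v, h]
    · funext i
      rcases x.2.2.1 i with h|h <;> simp [toZ, v, h]
  · intro y
    apply Subtype.ext
    apply Prod.ext
    · funext i
      cases h : y.1.1 i <;> simp [toZ, v, h]
    · funext i
      cases h : y.1.2 i <;> simp [toZ, v, h]

end NC

theorem noncrossing_pairs_count (m : ℕ) (n1 : ℤ) (n2 a : ℕ)
    (ha : 2 * (a : ℤ) = (m : ℤ) - n1) (h1 : |n1| ≤ (m : ℤ)) (h2 : a + n2 ≤ m) :
    (m + 1) * Nat.card {p : (Fin m → ℤ) × (Fin m → ℤ) //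
      (∀ i, p.1 i = -1 ∨ p.1 i = 1) ∧ (∀ i, p.2 i = -1 ∨ p.2 i = 1) ∧
      (∀ j, 1 ≤ j → j ≤ m → pSum m p.2 j ≤ pSum m p.1 j) ∧
      pSum m p.1 m = n1 ∧ pSum m p.2 m = n1 - 2 * n2}
    = (n2 + 1) * (m + 1).choose a * (m + 1).choose (a + n2 + 1) := by
  have hs : n1 = (m:ℤ) - 2*(a:ℕ) := by omega
  have ht : n1 - 2*(n2:ℕ) = (m:ℤ) - 2*((a:ℕ)+(n2:ℕ)) := by push_cast; omega
  rw [NC.bridge m n1 (n1 - 2*(n2:ℕ))]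
  have hst : n1 - 2*(n2:ℕ) ≤ n1 := by
    have : (0:ℤ) ≤ (n2:ℕ) := by positivity
    omega
  have hcm := NC.count_main m n1 (n1 - 2*(n2:ℕ)) hst
  have hE : (NC.ends m n1 (n1 - 2*(n2:ℕ))).card = m.choose a * m.choose (a+n2) := by
    have h := NC.card_ends m a (a+n2)
    have e1 : ((m:ℤ) - 2*((a:ℕ):ℤ)) = n1 := hs.symm
    have e2 : ((m:ℤ) - 2*(((a+n2:ℕ)):ℤ)) = n1 - 2*(n2:ℕ) := by push_cast; omega
    rw [e1, e2] at h
    exact h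
  rcases Nat.eq_zero_or_pos a with ha0 | hapos
  · subst ha0
    have hX : (NC.ends m (n1 - 2*(n2:ℕ) - 2) (n1 + 2)).card = 0 := by
      apply NC.ends_empty
      omega
    rw [hX] at hcm
    have hG : (univ.filter (fun p : NC.PP m => NC.Good m p ∧ NC.bS m p.1 m = n1 ∧
        NC.bS m p.2 m = n1 - 2*(n2:ℕ))).card = m.choose 0 * m.choose (0+n2) := by omega
    rw [hG]
    simpa using NC.arith0 m n2 (by omega)
  · obtain ⟨b, rfl⟩ : ∃ b, a = b + 1 := ⟨a - 1, by omega⟩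
    have hX : (NC.ends m (n1 - 2*(n2:ℕ) - 2) (n1 + 2)).card
        = m.choose (b+n2+2) * m.choose b := by
      rw [show (NC.ends m (n1 - 2*(n2:ℕ) - 2) (n1 + 2))
          = NC.ends m ((m:ℤ) - 2*((b+n2+2:ℕ))) ((m:ℤ) - 2*((b:ℕ))) from ?_]
      · exact NC.card_ends m (b+n2+2) b
      · congr 1 <;> push_cast <;> omega
    rw [hX, hE] at hcm
    have har := NC.arith m b n2 (by omega)
    have hmul := congrArg (fun x => (m+1) * x) hcm
    simp only [Nat.mul_add] at hmul
    omega
end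

section
/- Let G(m; n1, n2) be the number of walks of length m from (0,0) to (n1, n2) with steps W=(-1,0), E=(1,0), NE=(1,1), SW=(-1,-1), remaining in the upper half-plane {(i,j) : j ≥ 0}. Then for m ≡ n1 (mod 2), |n1| ≤ m, 0 ≤ n2, G(m; n1, n2) = ((n2+1)/(m+1)) · C(m+1, (m-n1)/2) · C(m+1, (m-n1)/2 + n2 + 1). -/
open Finset

/-- Number of walks of length m to (n1,n2) with Gessel steps staying in the upper
half-plane j ≥ 0. -/
noncomputable def gesselG (m : ℕ) (n1 n2 : ℤ) : ℕ :=
  Nat.card {w : Fin m → Fin 4 //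
    (∀ j, 1 ≤ j → j ≤ m → 0 ≤ (wpos m w j).2) ∧ wpos m w m = (n1, n2)}

namespace HP

def sg (b : Bool) : ℤ := if b then 1 else -1

def P (m : ℕ) (e : Fin m → Bool) (j : ℕ) : ℤ :=
  ∑ i : Fin m, if (i : ℕ) < j then sg (e i) else 0

lemma P_zero (m : ℕ) (e : Fin m → Bool) : P m e 0 = 0 := by simp [P]

lemma P_succ' (m : ℕ) (e : Fin m → Bool) (j : ℕ) :
    P m e (j+1) = P m e j + (if hj : j < m then sg (e ⟨j, hj⟩) else 0) := by
  by_cases hj : j < m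
  · rw [dif_pos hj]
    have : ∀ i : Fin m, (if (i:ℕ) < j+1 then sg (e i) else 0)
        = (if (i:ℕ) < j then sg (e i) else 0) + (if i = ⟨j, hj⟩ then sg (e i) else 0) := by
      intro i
      rcases lt_trichotomy (i:ℕ) j with h|h|h
      · have : i ≠ ⟨j, hj⟩ := by intro he; rw [he] at h; simp at h
        simp [h, Nat.lt_succ_of_lt h, this]
      · have : i = ⟨j, hj⟩ := by ext; exact h
        simp [this, h]
      · have h1 : ¬ ((i:ℕ) < j + 1) := by omega
        have h2 : ¬ ((i:ℕ) < j) := by omega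
        have : i ≠ ⟨j, hj⟩ := by intro he; rw [he] at h; simp at h
        simp [h1, h2, this]
    rw [P, Finset.sum_congr rfl (fun i _ => this i), Finset.sum_add_distrib]
    simp [P, Finset.sum_ite_eq']
  · rw [dif_neg hj]
    have : ∀ i : Fin m, ((i:ℕ) < j + 1) ↔ ((i:ℕ) < j) := by
      intro i; have := i.isLt; omega
    simp only [P, this, add_zero]

lemma P_top (m : ℕ) (e : Fin m → Bool) (j : ℕ) (h : m ≤ j) :
    P m e j = ∑ i, sg (e i) := by
  apply Finset.sum_congr rfl; intro i _
  rw [if_pos (lt_of_lt_of_le i.isLt h)]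

lemma sg_bound (b : Bool) : -1 ≤ sg b ∧ sg b ≤ 1 := by cases b <;> simp [sg]

lemma sg_not (b : Bool) : sg (!b) = - sg b := by cases b <;> simp [sg]

lemma even_step (b c : Bool) : Even (sg b + sg c) := by cases b <;> cases c <;> decide

lemma even_Q (m : ℕ) (e d : Fin m → Bool) (j : ℕ) : Even (P m e j + P m d j) := by
  induction j with
  | zero => simp [P_zero]
  | succ j ih =>
    rw [P_succ' m e j, P_succ' m d j]
    by_cases hj : j < m
    · rw [dif_pos hj, dif_pos hj]
      have h2 : (P m e j + sg (e ⟨j, hj⟩)) + (P m d j + sg (d ⟨j, hj⟩))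
          = (P m e j + P m d j) + (sg (e ⟨j, hj⟩) + sg (d ⟨j, hj⟩)) := by ring
      rw [h2]; exact ih.add (even_step _ _)
    · simpa [dif_neg hj] using ih

lemma sum_sg (m : ℕ) (e : Fin m → Bool) :
    ∑ i, sg (e i) = 2 * ((univ.filter fun i => e i = true).card : ℤ) - m := by
  have h1 : ∀ i : Fin m, sg (e i) = 2 * (if e i = true then (1:ℤ) else 0) - 1 := by
    intro i; cases h : e i <;> simp [sg, h]
  rw [Finset.sum_congr rfl (fun i _ => h1 i)]
  rw [Finset.sum_sub_distrib, ← Finset.mul_sum, Finset.sum_boole]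
  simp [mul_comm]

lemma card_sum_eq (m t : ℕ) :
    (univ.filter fun e : Fin m → Bool => (∑ i, sg (e i)) = 2 * (t : ℤ) - m).card
      = m.choose t := by
  have hiff : ∀ e : Fin m → Bool,
      ((∑ i, sg (e i)) = 2 * (t : ℤ) - m) ↔ (univ.filter fun i => e i = true).card = t := by
    intro e; rw [sum_sg]; constructor
    · intro h; omega
    · intro h; rw [h]
  rw [Finset.filter_congr (fun e _ => hiff e)]
  have hc := Finset.card_powersetCard t (univ : Finset (Fin m))
  rw [Finset.card_univ, Fintype.card_fin] at hc
  rw [← hc]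
  · apply Finset.card_bij (fun e _ => univ.filter fun i => e i = true)
    · intro e he
      simp only [Finset.mem_filter, Finset.mem_univ, true_and] at he
      simp [Finset.mem_powersetCard, he]
    · intro e1 h1 e2 h2 heq
      funext i
      have : (i ∈ univ.filter fun i => e1 i = true) ↔ (i ∈ univ.filter fun i => e2 i = true) := by
        rw [heq]
      simpa using this
    · intro s hs
      refine ⟨fun i => i ∈ s, ?_, ?_⟩
      · simp only [Finset.mem_filter, Finset.mem_univ, true_and]
        rw [Finset.mem_powersetCard] at hs
        rw [← hs.2]; congr 1; ext i; simp
      · ext i; simp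

lemma card_sum_zero (m : ℕ) (s : ℤ) (hs : s < -(m:ℤ)) :
    (univ.filter fun e : Fin m → Bool => (∑ i, sg (e i)) = s).card = 0 := by
  rw [Finset.card_eq_zero, Finset.filter_eq_empty_iff]
  intro e _
  rw [sum_sg]
  have : (0:ℤ) ≤ ((univ.filter fun i => e i = true).card : ℤ) := by positivity
  omega

open scoped Classical in
/-- Reflection map. -/
noncomputable def R (m : ℕ) (x : (Fin m → Bool) × (Fin m → Bool)) :
    (Fin m → Bool) × (Fin m → Bool) :=
  if h : ∃ j, j ≤ m ∧ P m x.1 j + P m x.2 j < 0 then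
    (fun i => if (i:ℕ) < Nat.find h then x.1 i else !(x.2 i),
     fun i => if (i:ℕ) < Nat.find h then x.2 i else !(x.1 i))
  else x

section
open scoped Classical

lemma find_facts (m : ℕ) (x : (Fin m → Bool) × (Fin m → Bool))
    (h : ∃ j, j ≤ m ∧ P m x.1 j + P m x.2 j < 0) :
    1 ≤ Nat.find h ∧ Nat.find h ≤ m ∧
    P m x.1 (Nat.find h) + P m x.2 (Nat.find h) = -2 ∧
    ∀ j < Nat.find h, 0 ≤ P m x.1 j + P m x.2 j := by
  obtain ⟨hm, hneg⟩ := Nat.find_spec h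
  have hmin : ∀ j < Nat.find h, 0 ≤ P m x.1 j + P m x.2 j := by
    intro j hj
    have := Nat.find_min h hj
    push_neg at this
    exact this (le_trans (le_of_lt hj) hm)
  have h1 : 1 ≤ Nat.find h := by
    rcases Nat.eq_zero_or_pos (Nat.find h) with h0 | h0
    · rw [h0] at hneg; simp [P_zero] at hneg
    · exact h0
  have hstep : ∀ j, P m x.1 (j+1) + P m x.2 (j+1) ≥ P m x.1 j + P m x.2 j - 2 := by
    intro j
    rw [P_succ' m x.1 j, P_succ' m x.2 j]
    by_cases hj : j < m
    · rw [dif_pos hj, dif_pos hj]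
      have := (sg_bound (x.1 ⟨j, hj⟩)).1
      have := (sg_bound (x.2 ⟨j, hj⟩)).1
      omega
    · rw [dif_neg hj, dif_neg hj]; omega
  have hprev : 0 ≤ P m x.1 (Nat.find h - 1) + P m x.2 (Nat.find h - 1) :=
    hmin _ (by omega)
  have hs := hstep (Nat.find h - 1)
  rw [Nat.sub_add_cancel h1] at hs
  obtain ⟨k, hk⟩ := even_Q m x.1 x.2 (Nat.find h)
  exact ⟨h1, hm, by omega, hmin⟩

lemma refl_le (m : ℕ) (x : (Fin m → Bool) × (Fin m → Bool))
    (h : ∃ j, j ≤ m ∧ P m x.1 j + P m x.2 j < 0) (j : ℕ) (hj : j ≤ Nat.find h) :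
    P m (R m x).1 j = P m x.1 j ∧ P m (R m x).2 j = P m x.2 j := by
  rw [R, dif_pos h]
  dsimp only
  constructor <;>
  · apply Finset.sum_congr rfl
    intro i _
    by_cases hi : (i:ℕ) < j
    · simp only [if_pos hi, if_pos (lt_of_lt_of_le hi hj)]
    · simp only [if_neg hi]

lemma refl_ge (m : ℕ) (x : (Fin m → Bool) × (Fin m → Bool))
    (h : ∃ j, j ≤ m ∧ P m x.1 j + P m x.2 j < 0) (j : ℕ) (hj : Nat.find h ≤ j) :
    P m (R m x).1 j = -2 - P m x.2 j ∧ P m (R m x).2 j = -2 - P m x.1 j := by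
  have hQ := (find_facts m x h).2.2.1
  set j0 := Nat.find h with hj0
  have key1 : P m (R m x).1 j = (P m x.1 j0 + P m x.2 j0) - P m x.2 j := by
    rw [R, dif_pos h]
    dsimp only
    rw [← hj0]; simp only [P]
    have : ∀ i : Fin m, (if (i:ℕ) < j then sg (if (i:ℕ) < j0 then x.1 i else !(x.2 i)) else 0)
        = ((if (i:ℕ) < j0 then sg (x.1 i) else 0) + (if (i:ℕ) < j0 then sg (x.2 i) else 0))
          - (if (i:ℕ) < j then sg (x.2 i) else 0) := by
      intro i
      by_cases h1 : (i:ℕ) < j0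
      · rw [if_pos h1, if_pos h1, if_pos h1, if_pos (lt_of_lt_of_le h1 hj),
          if_pos (lt_of_lt_of_le h1 hj)]
        ring
      · rw [if_neg h1, if_neg h1, if_neg h1]
        by_cases h2 : (i:ℕ) < j
        · rw [if_pos h2, if_pos h2, sg_not]; ring
        · rw [if_neg h2, if_neg h2]; ring
    rw [Finset.sum_congr rfl (fun i _ => this i), Finset.sum_sub_distrib,
      Finset.sum_add_distrib]
  have key2 : P m (R m x).2 j = (P m x.1 j0 + P m x.2 j0) - P m x.1 j := by
    rw [R, dif_pos h]
    dsimp only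
    rw [← hj0]; simp only [P]
    have : ∀ i : Fin m, (if (i:ℕ) < j then sg (if (i:ℕ) < j0 then x.2 i else !(x.1 i)) else 0)
        = ((if (i:ℕ) < j0 then sg (x.1 i) else 0) + (if (i:ℕ) < j0 then sg (x.2 i) else 0))
          - (if (i:ℕ) < j then sg (x.1 i) else 0) := by
      intro i
      by_cases h1 : (i:ℕ) < j0
      · rw [if_pos h1, if_pos h1, if_pos h1, if_pos (lt_of_lt_of_le h1 hj),
          if_pos (lt_of_lt_of_le h1 hj)]
        ring
      · rw [if_neg h1, if_neg h1, if_neg h1]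
        by_cases h2 : (i:ℕ) < j
        · rw [if_pos h2, if_pos h2, sg_not]; ring
        · rw [if_neg h2, if_neg h2]; ring
    rw [Finset.sum_congr rfl (fun i _ => this i), Finset.sum_sub_distrib,
      Finset.sum_add_distrib]
  rw [key1, key2, hQ]
  exact ⟨by ring, by ring⟩

lemma refl_exists (m : ℕ) (x : (Fin m → Bool) × (Fin m → Bool))
    (h : ∃ j, j ≤ m ∧ P m x.1 j + P m x.2 j < 0) :
    ∃ j, j ≤ m ∧ P m (R m x).1 j + P m (R m x).2 j < 0 := by
  obtain ⟨-, hm, hQ, -⟩ := find_facts m x h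
  obtain ⟨k1, k2⟩ := refl_ge m x h (Nat.find h) le_rfl
  exact ⟨Nat.find h, hm, by rw [k1, k2]; omega⟩

lemma refl_find (m : ℕ) (x : (Fin m → Bool) × (Fin m → Bool))
    (h : ∃ j, j ≤ m ∧ P m x.1 j + P m x.2 j < 0) :
    Nat.find (refl_exists m x h) = Nat.find h := by
  obtain ⟨-, hm, hQ, hmin⟩ := find_facts m x h
  rw [Nat.find_eq_iff]
  constructor
  · obtain ⟨k1, k2⟩ := refl_ge m x h (Nat.find h) le_rfl
    exact ⟨hm, by rw [k1, k2]; omega⟩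
  · intro j hj
    obtain ⟨k1, k2⟩ := refl_le m x h j (le_of_lt hj)
    push_neg
    intro
    rw [k1, k2]
    exact hmin j hj

lemma refl_invol (m : ℕ) (x : (Fin m → Bool) × (Fin m → Bool))
    (h : ∃ j, j ≤ m ∧ P m x.1 j + P m x.2 j < 0) :
    R m (R m x) = x := by
  have h' := refl_exists m x h
  have hf := refl_find m x h
  conv_lhs => rw [R]
  rw [dif_pos h']
  ext i
  · simp only [hf]
    by_cases hi : (i:ℕ) < Nat.find h
    · rw [if_pos hi, R, dif_pos h]
      simp only [if_pos hi]
    · rw [if_neg hi]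
      rw [R, dif_pos h]
      simp only [if_neg hi, Bool.not_not]
  · simp only [hf]
    by_cases hi : (i:ℕ) < Nat.find h
    · rw [if_pos hi, R, dif_pos h]
      simp only [if_pos hi]
    · rw [if_neg hi]
      rw [R, dif_pos h]
      simp only [if_neg hi, Bool.not_not]

/-- Reflection bijection: violating walks with endpoint sums `(s1, s2)` are equinumerous
with free walks with endpoint sums `(-2-s2, -2-s1)`. -/
lemma card_V_eq_C (m : ℕ) (s1 s2 : ℤ) (hs : 0 ≤ s1 + s2) :
    (univ.filter fun x : (Fin m → Bool) × (Fin m → Bool) =>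
        (P m x.1 m = s1 ∧ P m x.2 m = s2) ∧ ∃ j, j ≤ m ∧ P m x.1 j + P m x.2 j < 0).card
    = (univ.filter fun x : (Fin m → Bool) × (Fin m → Bool) =>
        P m x.1 m = -2 - s2 ∧ P m x.2 m = -2 - s1).card := by
  apply Finset.card_bij' (fun x _ => R m x) (fun y _ => R m y)
  · intro x hx
    simp only [Finset.mem_filter, Finset.mem_univ, true_and] at hx ⊢
    obtain ⟨⟨he1, he2⟩, hex⟩ := hx
    have hm := (find_facts m x hex).2.1
    obtain ⟨k1, k2⟩ := refl_ge m x hex m hm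
    rw [k1, k2, he1, he2]
    exact ⟨rfl, rfl⟩
  · intro y hy
    simp only [Finset.mem_filter, Finset.mem_univ, true_and] at hy ⊢
    obtain ⟨he1, he2⟩ := hy
    have hex : ∃ j, j ≤ m ∧ P m y.1 j + P m y.2 j < 0 :=
      ⟨m, le_rfl, by rw [he1, he2]; omega⟩
    have hm := (find_facts m y hex).2.1
    obtain ⟨k1, k2⟩ := refl_ge m y hex m hm
    refine ⟨⟨?_, ?_⟩, refl_exists m y hex⟩
    · rw [k1, he2]; ring
    · rw [k2, he1]; ring
  · intro x hx
    simp only [Finset.mem_filter, Finset.mem_univ, true_and] at hx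
    exact refl_invol m x hx.2
  · intro y hy
    simp only [Finset.mem_filter, Finset.mem_univ, true_and] at hy
    have hex : ∃ j, j ≤ m ∧ P m y.1 j + P m y.2 j < 0 :=
      ⟨m, le_rfl, by rw [hy.1, hy.2]; omega⟩
    exact refl_invol m y hex

/-- Splitting the endpoint-constrained set into good and violating walks. -/
lemma card_split (m : ℕ) (s1 s2 : ℤ) :
    (univ.filter fun x : (Fin m → Bool) × (Fin m → Bool) =>
        (P m x.1 m = s1 ∧ P m x.2 m = s2) ∧ ∀ j, j ≤ m → 0 ≤ P m x.1 j + P m x.2 j).card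
    + (univ.filter fun x : (Fin m → Bool) × (Fin m → Bool) =>
        (P m x.1 m = s1 ∧ P m x.2 m = s2) ∧ ∃ j, j ≤ m ∧ P m x.1 j + P m x.2 j < 0).card
    = (univ.filter fun x : (Fin m → Bool) × (Fin m → Bool) =>
        P m x.1 m = s1 ∧ P m x.2 m = s2).card := by
  have h1 := Finset.card_filter_add_card_filter_not
    (s := (univ.filter fun x : (Fin m → Bool) × (Fin m → Bool) =>
        P m x.1 m = s1 ∧ P m x.2 m = s2))
    (p := fun x => ∀ j, j ≤ m → 0 ≤ P m x.1 j + P m x.2 j)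
  rw [Finset.filter_filter, Finset.filter_filter] at h1
  rw [← h1]
  congr 2
  ext x
  simp only [Finset.mem_filter, Finset.mem_univ, true_and]
  constructor
  · rintro ⟨hep, j, hj1, hj2⟩
    exact ⟨hep, by push_neg; exact ⟨j, hj1, hj2⟩⟩
  · rintro ⟨hep, hne⟩
    push_neg at hne
    obtain ⟨j, hj1, hj2⟩ := hne
    exact ⟨hep, j, hj1, hj2⟩

/-- Product structure of the free count. -/
lemma card_prod (m : ℕ) (s1 s2 : ℤ) :
    (univ.filter fun x : (Fin m → Bool) × (Fin m → Bool) =>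
        P m x.1 m = s1 ∧ P m x.2 m = s2).card
    = (univ.filter fun e : Fin m → Bool => (∑ i, sg (e i)) = s1).card
      * (univ.filter fun e : Fin m → Bool => (∑ i, sg (e i)) = s2).card := by
  have hpt : ∀ (e : Fin m → Bool), P m e m = ∑ i, sg (e i) := fun e => P_top m e m le_rfl
  simp only [hpt]
  rw [← Finset.univ_product_univ,
    Finset.filter_product (fun e : Fin m → Bool => (∑ i, sg (e i)) = s1)
      (fun e : Fin m → Bool => (∑ i, sg (e i)) = s2),
    Finset.card_product]

end

end HP


namespace HP

def f4 : Bool × Bool → Fin 4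
  | (false, false) => 3
  | (false, true) => 0
  | (true, false) => 1
  | (true, true) => 2

def g4 : Fin 4 → Bool × Bool
  | 0 => (false, true)
  | 1 => (true, false)
  | 2 => (true, true)
  | 3 => (false, false)

lemma g4_f4 : ∀ p, g4 (f4 p) = p := by decide

lemma f4_g4 : ∀ k, f4 (g4 k) = k := by decide

lemma gstep_f4_1 (p : Bool × Bool) : (gstep (f4 p)).1 = sg p.1 := by
  rcases p with ⟨b, c⟩; cases b <;> cases c <;> rfl

lemma gstep_f4_2 (p : Bool × Bool) : 2 * (gstep (f4 p)).2 = sg p.1 + sg p.2 := by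
  rcases p with ⟨b, c⟩; cases b <;> cases c <;> rfl

/-- Walks as pairs of boolean sequences. -/
def Phi (m : ℕ) : ((Fin m → Bool) × (Fin m → Bool)) ≃ (Fin m → Fin 4) where
  toFun x := fun i => f4 (x.1 i, x.2 i)
  invFun w := (fun i => (g4 (w i)).1, fun i => (g4 (w i)).2)
  left_inv := by
    intro x
    apply Prod.ext
    · funext i
      show (g4 (f4 (x.1 i, x.2 i))).1 = x.1 i
      rw [g4_f4]
    · funext i
      show (g4 (f4 (x.1 i, x.2 i))).2 = x.2 i
      rw [g4_f4]
  right_inv := by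
    intro w; funext i; exact f4_g4 (w i)

lemma wpos1 (m : ℕ) (x : (Fin m → Bool) × (Fin m → Bool)) (j : ℕ) :
    (wpos m (Phi m x) j).1 = P m x.1 j := by
  rw [wpos, Prod.fst_sum, P]
  apply Finset.sum_congr rfl
  intro i _
  rw [apply_ite Prod.fst]
  have : (Phi m x i) = f4 (x.1 i, x.2 i) := rfl
  rw [this, gstep_f4_1]
  rfl

lemma wpos2 (m : ℕ) (x : (Fin m → Bool) × (Fin m → Bool)) (j : ℕ) :
    2 * (wpos m (Phi m x) j).2 = P m x.1 j + P m x.2 j := by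
  rw [wpos, Prod.snd_sum, Finset.mul_sum, P, P, ← Finset.sum_add_distrib]
  apply Finset.sum_congr rfl
  intro i _
  rw [apply_ite Prod.snd, mul_ite]
  have : (Phi m x i) = f4 (x.1 i, x.2 i) := rfl
  rw [this, gstep_f4_2]
  by_cases hi : (i:ℕ) < j
  · simp [hi]
  · simp [hi]

section
open scoped Classical

lemma gesselG_eq (m : ℕ) (n1 n2 : ℤ) :
    gesselG m n1 n2 = (univ.filter fun x : (Fin m → Bool) × (Fin m → Bool) =>
        (P m x.1 m = n1 ∧ P m x.2 m = 2 * n2 - n1) ∧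
        ∀ j, j ≤ m → 0 ≤ P m x.1 j + P m x.2 j).card := by
  have hiff : ∀ x : (Fin m → Bool) × (Fin m → Bool),
      ((P m x.1 m = n1 ∧ P m x.2 m = 2 * n2 - n1) ∧
        ∀ j, j ≤ m → 0 ≤ P m x.1 j + P m x.2 j)
      ↔ ((∀ j, 1 ≤ j → j ≤ m → 0 ≤ (wpos m (Phi m x) j).2) ∧
          wpos m (Phi m x) m = (n1, n2)) := by
    intro x
    constructor
    · rintro ⟨⟨he1, he2⟩, hnn⟩
      constructor
      · intro j _ hj
        have h2 := wpos2 m x j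
        have := hnn j hj
        omega
      · have h1 := wpos1 m x m
        have h2 := wpos2 m x m
        apply Prod.ext
        · rw [h1, he1]
        · rw [he1, he2] at h2; omega
    · rintro ⟨hnn, hend⟩
      have h1 := wpos1 m x m
      have h2 := wpos2 m x m
      rw [hend] at h1 h2
      simp only at h1 h2
      refine ⟨⟨h1.symm, by omega⟩, ?_⟩
      intro j hj
      rcases Nat.eq_zero_or_pos j with h0 | h0
      · rw [h0, P_zero, P_zero]; norm_num
      · have := hnn j h0 hj
        have h2j := wpos2 m x j
        omega
  rw [gesselG]
  rw [Nat.card_congr (Equiv.subtypeEquiv (Phi m) hiff).symm]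
  rw [Nat.card_eq_fintype_card, Fintype.card_subtype]

end
end HP

open HP in
theorem half_plane_count (m : ℕ) (n1 : ℤ) (n2 a : ℕ)
    (ha : 2 * (a : ℤ) = (m : ℤ) - n1) (h1 : |n1| ≤ (m : ℤ)) :
    (m + 1) * gesselG m n1 (n2 : ℤ) =
      (n2 + 1) * (m + 1).choose a * (m + 1).choose (a + n2 + 1) := by
  have habs := abs_le.mp h1
  have ham : a ≤ m := by omega
  -- pure arithmetic facts, proved before any cardinality facts enter the context
  have F0 : (0:ℤ) ≤ n1 + (2*(n2:ℤ) - n1) := by push_cast; omega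
  have F1 : n1 = 2 * ((m - a : ℕ) : ℤ) - m := by push_cast [ham]; omega
  have F2 : 2*(n2:ℤ) - n1 = 2 * ((a + n2 : ℕ) : ℤ) - m := by push_cast; omega
  have F3 : a = 0 → -2 - n1 < -(m:ℤ) := by intro h; push_cast [h] at ha ⊢; omega
  have F4 : m < a + n2 + 1 → -2 - (2*(n2:ℤ) - n1) < -(m:ℤ) := by intro h; push_cast; omega
  have F5 : m < a + n2 + 1 → a + n2 ≤ m → a + n2 = m := by omega
  have F6 : a + n2 = m → m + 1 - a = n2 + 1 := by omega
  have F8 : a + n2 + 1 ≤ m → -2 - (2*(n2:ℤ) - n1) = 2 * ((m - (a + n2 + 1) : ℕ) : ℤ) - m := by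
    intro h; push_cast [h]; omega
  have F9 : 1 ≤ a → -2 - n1 = 2 * ((a - 1 : ℕ) : ℤ) - m := by
    intro h; push_cast [h]; omega
  clear ha h1 habs
  have hBe : (univ.filter fun e : Fin m → Bool => (∑ i, HP.sg (e i)) = n1).card
      = m.choose (m - a) := by rw [F1, HP.card_sum_eq]
  have hBd : (univ.filter fun e : Fin m → Bool => (∑ i, HP.sg (e i)) = 2*(n2:ℤ) - n1).card
      = m.choose (a + n2) := by rw [F2, HP.card_sum_eq]
  have key : (univ.filter fun x : (Fin m → Bool) × (Fin m → Bool) =>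
        (HP.P m x.1 m = n1 ∧ HP.P m x.2 m = 2*(n2:ℤ) - n1) ∧
        ∀ j, j ≤ m → 0 ≤ HP.P m x.1 j + HP.P m x.2 j).card
      + (univ.filter fun e : Fin m → Bool => (∑ i, HP.sg (e i)) = -2 - (2*(n2:ℤ) - n1)).card
        * (univ.filter fun e : Fin m → Bool => (∑ i, HP.sg (e i)) = -2 - n1).card
      = m.choose (m - a) * m.choose (a + n2) := by
    have hsplit := HP.card_split m n1 (2*(n2:ℤ) - n1)
    have hVC := HP.card_V_eq_C m n1 (2*(n2:ℤ) - n1) F0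
    have hprodB := HP.card_prod m n1 (2*(n2:ℤ) - n1)
    have hprodC := HP.card_prod m (-2 - (2*(n2:ℤ) - n1)) (-2 - n1)
    rw [hVC, hprodB, hprodC, hBe, hBd] at hsplit
    exact hsplit
  rw [HP.gesselG_eq m n1 (n2:ℤ)]
  by_cases hc1 : a = 0
  · have hCd : (univ.filter fun e : Fin m → Bool =>
        (∑ i, HP.sg (e i)) = -2 - n1).card = 0 := HP.card_sum_zero m _ (F3 hc1)
    rw [hCd, Nat.mul_zero, Nat.add_zero] at key
    rw [key, hc1]
    simp only [Nat.sub_zero, Nat.choose_self, Nat.zero_add, one_mul, Nat.choose_zero_right,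
      mul_one]
    have hms := Nat.add_one_mul_choose_eq m n2
    rw [hms]
    ring
  · have ha1 : 1 ≤ a := Nat.one_le_iff_ne_zero.mpr hc1
    by_cases hc2 : m < a + n2 + 1
    · have hCe : (univ.filter fun e : Fin m → Bool =>
          (∑ i, HP.sg (e i)) = -2 - (2*(n2:ℤ) - n1)).card = 0 :=
        HP.card_sum_zero m _ (F4 hc2)
      rw [hCe, Nat.zero_mul, Nat.add_zero] at key
      rw [key]
      rcases Nat.lt_or_ge m (a + n2) with hlt | hge
      · rw [Nat.choose_eq_zero_of_lt hlt, Nat.choose_eq_zero_of_lt (Nat.succ_lt_succ hlt)]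
        ring
      · have heq : a + n2 = m := F5 hc2 hge
        have h3 : m.choose (a + n2) = 1 := by rw [heq, Nat.choose_self]
        have h4 : (m+1).choose (a + n2 + 1) = 1 := by
          have h5 : a + n2 + 1 = m + 1 := congrArg (· + 1) heq
          rw [h5, Nat.choose_self]
        rw [h3, h4, Nat.choose_symm ham]
        have hms := Nat.choose_mul_succ_eq m a
        rw [F6 heq] at hms
        calc (m + 1) * (m.choose a * 1) = m.choose a * (m + 1) := by ring
        _ = (m+1).choose a * (n2 + 1) := hms
        _ = (n2 + 1) * (m+1).choose a * 1 := by ring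
    · push_neg at hc2
      have hCe : (univ.filter fun e : Fin m → Bool =>
          (∑ i, HP.sg (e i)) = -2 - (2*(n2:ℤ) - n1)).card = m.choose (a + n2 + 1) := by
        rw [F8 hc2, HP.card_sum_eq, Nat.choose_symm hc2]
      have hCd : (univ.filter fun e : Fin m → Bool =>
          (∑ i, HP.sg (e i)) = -2 - n1).card = m.choose (a - 1) := by
        rw [F9 ha1, HP.card_sum_eq]
      rw [hCe, hCd, Nat.choose_symm ham] at key
      -- the binomial identity
      have e1 : (m + 1) * (m.choose a * m.choose (a + n2))
          = (m + 1) * (m.choose (a + n2 + 1) * m.choose (a - 1))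
            + (n2 + 1) * (m+1).choose a * (m+1).choose (a + n2 + 1) := by
        have h1 : ((m:ℤ) + 1) * m.choose (a + n2)
            = (m+1).choose (a + n2 + 1) * ((a:ℤ) + n2 + 1) := by
          have h := Nat.add_one_mul_choose_eq m (a + n2)
          exact_mod_cast h
        have h2 : ((m:ℤ) + 1) * m.choose (a - 1) = (m+1).choose a * (a:ℤ) := by
          have h := Nat.add_one_mul_choose_eq m (a - 1)
          rw [Nat.sub_add_cancel ha1] at h
          exact_mod_cast h
        have h3 : (m.choose (a - 1) : ℤ) + m.choose a = (m+1).choose a := by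
          have h := Nat.choose_succ_succ m (a - 1)
          rw [Nat.succ_eq_add_one, Nat.succ_eq_add_one, Nat.sub_add_cancel ha1] at h
          exact_mod_cast h.symm
        have h4 : (m.choose (a + n2) : ℤ) + m.choose (a + n2 + 1)
            = (m+1).choose (a + n2 + 1) := by
          have h := Nat.choose_succ_succ m (a + n2)
          simp only [Nat.succ_eq_add_one] at h
          exact_mod_cast h.symm
        have keyZ : ((m:ℤ) + 1) * (m.choose a * m.choose (a + n2))
            = ((m:ℤ) + 1) * (m.choose (a + n2 + 1) * m.choose (a - 1))
              + ((n2:ℤ) + 1) * (m+1).choose a * (m+1).choose (a + n2 + 1) := by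
          linear_combination ((m+1).choose a : ℤ) * h1 - ((m+1).choose (a + n2 + 1) : ℤ) * h2
            + ((m:ℤ) + 1) * (m.choose (a + n2) : ℤ) * h3
            - ((m:ℤ) + 1) * (m.choose (a - 1) : ℤ) * h4
        exact_mod_cast keyZ
      have e2 : (m + 1) * (univ.filter fun x : (Fin m → Bool) × (Fin m → Bool) =>
            (HP.P m x.1 m = n1 ∧ HP.P m x.2 m = 2*(n2:ℤ) - n1) ∧
            ∀ j, j ≤ m → 0 ≤ HP.P m x.1 j + HP.P m x.2 j).card
          + (m + 1) * (m.choose (a + n2 + 1) * m.choose (a - 1))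
          = (n2 + 1) * (m+1).choose a * (m+1).choose (a + n2 + 1)
            + (m + 1) * (m.choose (a + n2 + 1) * m.choose (a - 1)) := by
        rw [← Nat.mul_add, key, e1]
        ring
      exact Nat.add_right_cancel e2
end

section
/- The number of unconstrained walks of length m from (0,0) to (n1, n2) with steps in {(-1,0), (1,0), (1,1), (-1,-1)} equals C(m, (m-n1)/2) · C(m, (m-n1)/2 + n2) when m ≡ n1 (mod 2), and 0 otherwise. -/
open Finset

/-- Binomial coefficient with integer lower index, 0 when it is negative. -/
def chooseZ (n : ℕ) (k : ℤ) : ℕ := if 0 ≤ k then n.choose k.toNat else 0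

/-- Number of unconstrained walks of length m from the origin to (n1,n2). -/
noncomputable def gesselAll (m : ℕ) (n1 n2 : ℤ) : ℕ :=
  Nat.card {w : Fin m → Fin 4 // wpos m w m = (n1, n2)}

/-! ### Auxiliary material -/

def sg (b : Bool) : ℤ := if b then 1 else -1

def genc : Fin 4 → Bool × Bool
  | 0 => (false, false)
  | 1 => (true, true)
  | 2 => (true, false)
  | 3 => (false, true)

def gdec (p : Bool × Bool) : Fin 4 :=
  match p with
  | (false, false) => 0
  | (true, true) => 1
  | (true, false) => 2
  | (false, true) => 3

lemma gdec_genc : ∀ s : Fin 4, gdec (genc s) = s := by decide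
lemma genc_gdec : ∀ p : Bool × Bool, genc (gdec p) = p := by decide
lemma gstep1 : ∀ s : Fin 4, (gstep s).1 = sg (genc s).1 := by decide
lemma gstep2 : ∀ s : Fin 4, sg (genc s).2 = (gstep s).1 - 2 * (gstep s).2 := by decide

lemma card_falses (m t : ℕ) :
    Nat.card {f : Fin m → Bool // (univ.filter fun i => f i = false).card = t}
      = m.choose t := by
  have e : {f : Fin m → Bool // (univ.filter fun i => f i = false).card = t} ≃
      {s : Finset (Fin m) // s.card = t} :=
    { toFun := fun f => ⟨univ.filter fun i => f.1 i = false, f.2⟩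
      invFun := fun s => ⟨fun i => decide (i ∉ s.1), by
        have : (univ.filter fun i => (decide (i ∉ s.1)) = false) = s.1 := by
          ext i; simp
        simp [this, s.2]⟩
      left_inv := fun f => Subtype.ext (funext fun i => by
        cases h : f.1 i <;> simp [h])
      right_inv := fun s => Subtype.ext (by ext i; simp) }
  rw [Nat.card_congr e, Nat.card_eq_fintype_card, Fintype.card_finset_len,
    Fintype.card_fin]

lemma sum_sg_eq (m : ℕ) (f : Fin m → Bool) :
    (∑ i : Fin m, sg (f i))
      = (m : ℤ) - 2 * ((univ.filter fun i => f i = false).card : ℤ) := by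
  have h : ∀ i : Fin m, sg (f i) = 1 - 2 * (if f i = false then (1:ℤ) else 0) := by
    intro i; cases h : f i <;> simp [sg, h]
  rw [Finset.sum_congr rfl fun i _ => h i, Finset.sum_sub_distrib,
    Finset.sum_const, ← Finset.mul_sum, Finset.sum_boole]
  simp

lemma count_sg (m : ℕ) (s : ℤ) :
    Nat.card {f : Fin m → Bool // (∑ i : Fin m, sg (f i)) = s}
      = if ((m : ℤ) - s) % 2 = 0 then chooseZ m (((m : ℤ) - s) / 2) else 0 := by
  by_cases hpar : ((m : ℤ) - s) % 2 = 0
  · rw [if_pos hpar]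
    by_cases hneg : 0 ≤ ((m : ℤ) - s) / 2
    · rw [chooseZ, if_pos hneg]
      set t : ℕ := (((m : ℤ) - s) / 2).toNat with ht
      have e : {f : Fin m → Bool // (∑ i : Fin m, sg (f i)) = s} ≃
          {f : Fin m → Bool // (univ.filter fun i => f i = false).card = t} :=
        Equiv.subtypeEquivRight (fun f => by
          rw [sum_sg_eq]
          have htt : (t : ℤ) = ((m : ℤ) - s) / 2 := Int.toNat_of_nonneg hneg
          constructor
          · intro h
            have : ((univ.filter fun i => f i = false).card : ℤ) = t := by omega
            exact_mod_cast this
          · intro h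
            have : ((univ.filter fun i => f i = false).card : ℤ) = t := by
              exact_mod_cast h
            omega)
      rw [Nat.card_congr e, card_falses]
    · rw [chooseZ, if_neg hneg]
      have : IsEmpty {f : Fin m → Bool // (∑ i : Fin m, sg (f i)) = s} := by
        constructor
        rintro ⟨f, hf⟩
        rw [sum_sg_eq] at hf
        have h0 : (0:ℤ) ≤ ((univ.filter fun i => f i = false).card : ℤ) := by positivity
        omega
      simp [Nat.card_of_isEmpty]
  · rw [if_neg hpar]
    have : IsEmpty {f : Fin m → Bool // (∑ i : Fin m, sg (f i)) = s} := by
      constructor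
      rintro ⟨f, hf⟩
      rw [sum_sg_eq] at hf
      omega
    simp [Nat.card_of_isEmpty]

lemma sum_decomp (m : ℕ) (w : Fin m → Fin 4) (n1 n2 : ℤ) :
    (∑ i : Fin m, gstep (w i)) = (n1, n2) ↔
    ((∑ i : Fin m, sg ((genc (w i)).1)) = n1 ∧
     (∑ i : Fin m, sg ((genc (w i)).2)) = n1 - 2 * n2) := by
  have h1 : (∑ i : Fin m, sg ((genc (w i)).1)) = (∑ i : Fin m, gstep (w i)).1 := by
    rw [Prod.fst_sum]
    exact Finset.sum_congr rfl fun i _ => (gstep1 (w i)).symm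
  have h2 : (∑ i : Fin m, sg ((genc (w i)).2))
      = (∑ i : Fin m, gstep (w i)).1 - 2 * (∑ i : Fin m, gstep (w i)).2 := by
    rw [Prod.fst_sum, Prod.snd_sum, Finset.mul_sum, ← Finset.sum_sub_distrib]
    exact Finset.sum_congr rfl fun i _ => gstep2 (w i)
  rw [Prod.ext_iff]
  set A := (∑ i : Fin m, gstep (w i)).1
  set B := (∑ i : Fin m, gstep (w i)).2
  rw [h1, h2]
  constructor
  · rintro ⟨rfl, rfl⟩; exact ⟨rfl, rfl⟩
  · rintro ⟨rfl, h⟩; exact ⟨rfl, by omega⟩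

def walkEquiv (m : ℕ) (n1 n2 : ℤ) :
    {w : Fin m → Fin 4 // (∑ i : Fin m, gstep (w i)) = (n1, n2)} ≃
    {f : Fin m → Bool // (∑ i : Fin m, sg (f i)) = n1} ×
    {g : Fin m → Bool // (∑ i : Fin m, sg (g i)) = n1 - 2 * n2} where
  toFun w :=
    (⟨fun i => (genc (w.1 i)).1, ((sum_decomp m w.1 n1 n2).1 w.2).1⟩,
     ⟨fun i => (genc (w.1 i)).2, ((sum_decomp m w.1 n1 n2).1 w.2).2⟩)
  invFun p :=
    ⟨fun i => gdec (p.1.1 i, p.2.1 i), by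
      apply (sum_decomp m _ n1 n2).2
      constructor
      · have : ∀ i : Fin m, sg ((genc (gdec (p.1.1 i, p.2.1 i))).1) = sg (p.1.1 i) := by
          intro i; rw [genc_gdec]
        rw [Finset.sum_congr rfl fun i _ => this i]; exact p.1.2
      · have : ∀ i : Fin m, sg ((genc (gdec (p.1.1 i, p.2.1 i))).2) = sg (p.2.1 i) := by
          intro i; rw [genc_gdec]
        rw [Finset.sum_congr rfl fun i _ => this i]; exact p.2.2⟩
  left_inv w := Subtype.ext (funext fun i => by simp [gdec_genc])
  right_inv p := by
    ext i <;> simp [genc_gdec]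

lemma wpos_last (m : ℕ) (w : Fin m → Fin 4) :
    wpos m w m = ∑ i : Fin m, gstep (w i) := by
  unfold wpos
  exact Finset.sum_congr rfl fun i _ => if_pos i.isLt

lemma gesselAll_eq (m : ℕ) (n1 n2 : ℤ) :
    gesselAll m n1 n2 =
      (if ((m : ℤ) - n1) % 2 = 0 then chooseZ m (((m : ℤ) - n1) / 2) else 0) *
      (if ((m : ℤ) - (n1 - 2 * n2)) % 2 = 0
        then chooseZ m (((m : ℤ) - (n1 - 2 * n2)) / 2) else 0) := by
  rw [gesselAll,
    Nat.card_congr (Equiv.subtypeEquivRight fun w => by rw [wpos_last] :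
      {w : Fin m → Fin 4 // wpos m w m = (n1, n2)} ≃
      {w : Fin m → Fin 4 // (∑ i : Fin m, gstep (w i)) = (n1, n2)}),
    Nat.card_congr (walkEquiv m n1 n2), Nat.card_prod, count_sg, count_sg]

theorem unconstrained_count (m : ℕ) (n1 n2 : ℤ) :
    (((m : ℤ) - n1) % 2 = 0 →
      gesselAll m n1 n2 =
        chooseZ m (((m : ℤ) - n1) / 2) * chooseZ m (((m : ℤ) - n1) / 2 + n2)) ∧
    (((m : ℤ) - n1) % 2 ≠ 0 → gesselAll m n1 n2 = 0) := by
  constructor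
  · intro h
    rw [gesselAll_eq, if_pos h, if_pos (by omega)]
    congr 2
    omega
  · intro h
    rw [gesselAll_eq, if_neg h, zero_mul]
end

section
/- For all n ≥ 0, F(2n+2; 0, n) = ((2n+2)/(n+2)) · C(2n+2, n+1), where F(m;n1,n2) counts Gessel walks of length m from the origin to (n1,n2). -/
open Finset

namespace Gaux
def bval (b : Bool) : ℤ := if b then 1 else -1
def tval (b : Bool) : ℤ := if b then 1 else 0
def S (m : ℕ) (f : Fin m → Bool) (j : ℕ) : ℤ := pSum m (fun i => bval (f i)) j
def T (m : ℕ) (f : Fin m → Bool) (j : ℕ) : ℤ := pSum m (fun i => tval (f i)) j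

lemma pSum_castLE {m : ℕ} {j : ℕ} (h : j ≤ m) (c : Fin m → ℤ) :
    pSum m c j = ∑ i : Fin j, c (Fin.castLE h i) := by
  rw [pSum, ← Finset.sum_filter]
  exact (Finset.sum_bij (fun (a : Fin j) _ => Fin.castLE h a)
    (fun a _ => by simp [a.2]) (fun a _ b _ hab => by
      simpa [Fin.ext_iff] using congrArg Fin.val hab)
    (fun b hb => ⟨⟨b, (Finset.mem_filter.mp hb).2⟩, Finset.mem_univ _, rfl⟩)
    (fun a _ => rfl)).symm

lemma pSum_full {m : ℕ} (c : Fin m → ℤ) : pSum m c m = ∑ i, c i := by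
  rw [pSum_castLE le_rfl]; simp

lemma two_mul_T {m j : ℕ} (h : j ≤ m) (f : Fin m → Bool) :
    2 * T m f j = S m f j + j := by
  rw [T, S, pSum_castLE h, pSum_castLE h, Finset.mul_sum]
  have : ∀ b : Bool, 2 * tval b = bval b + 1 := by decide
  simp_rw [this]
  rw [Finset.sum_add_distrib]
  simp

lemma T_nonneg (m : ℕ) (f : Fin m → Bool) (j : ℕ) : 0 ≤ T m f j := by
  rw [T, pSum]
  refine Finset.sum_nonneg fun i _ => ?_
  split <;> [skip; exact le_rfl]
  cases f i <;> simp [tval]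

lemma T_mono (m : ℕ) (f : Fin m → Bool) {j₁ j₂ : ℕ} (h : j₁ ≤ j₂) :
    T m f j₁ ≤ T m f j₂ := by
  rw [T, T, pSum, pSum]
  refine Finset.sum_le_sum fun i _ => ?_
  rcases lt_or_ge (i : ℕ) j₁ with h1 | h1
  · rw [if_pos h1, if_pos (lt_of_lt_of_le h1 h)]
  · rw [if_neg (not_lt.mpr h1)]
    split
    · cases f i <;> simp [tval]
    · exact le_rfl

lemma gstep_fst (s : Fin 4) : (gstep s).1 = bval (decide (s = 1 ∨ s = 2)) := by
  revert s; decide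

lemma gstep_snd (s : Fin 4) :
    (gstep s).2 = tval (decide (s = 1 ∨ s = 2)) - tval (decide (s = 1 ∨ s = 3)) := by
  revert s; decide

lemma wpos_fst (m : ℕ) (w : Fin m → Fin 4) (j : ℕ) :
    (wpos m w j).1 = pSum m (fun i => (gstep (w i)).1) j := by
  rw [wpos, pSum, Prod.fst_sum]
  exact Finset.sum_congr rfl fun i _ => by split <;> rfl

lemma wpos_snd (m : ℕ) (w : Fin m → Fin 4) (j : ℕ) :
    (wpos m w j).2 = pSum m (fun i => (gstep (w i)).2) j := by
  rw [wpos, pSum, Prod.snd_sum]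
  exact Finset.sum_congr rfl fun i _ => by split <;> rfl

/-- The special-step indicator partial sum. -/
lemma pSum_sub (m : ℕ) (c d : Fin m → ℤ) (j : ℕ) :
    pSum m (fun i => c i - d i) j = pSum m c j - pSum m d j := by
  rw [pSum, pSum, pSum, ← Finset.sum_sub_distrib]
  exact Finset.sum_congr rfl fun i _ => by split <;> simp

lemma pSum_indicator (m : ℕ) (k : Fin m) (j : ℕ) :
    pSum m (fun i => if i = k then (1:ℤ) else 0) j = if (k:ℕ) < j then 1 else 0 := by
  rw [pSum]
  rw [Finset.sum_congr rfl (fun i _ => ?_), Finset.sum_ite_eq' univ k fun i => if (i:ℕ) < j then (1:ℤ) else 0]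
  · simp
  · split <;> split <;> simp_all

def mkw (m : ℕ) (k : Fin m) (f : Fin m → Bool) : Fin m → Fin 4 :=
  fun i => if i = k then (if f i then 1 else 3) else (if f i then 2 else 0)

lemma mkw_f {m : ℕ} (k : Fin m) (f : Fin m → Bool) (i : Fin m) :
    decide (mkw m k f i = 1 ∨ mkw m k f i = 2) = f i := by
  unfold mkw; by_cases h : i = k <;> cases hf : f i <;> simp [h, hf]

lemma mkw_sp {m : ℕ} (k : Fin m) (f : Fin m → Bool) (i : Fin m) :
    decide (mkw m k f i = 1 ∨ mkw m k f i = 3) = decide (i = k) := by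
  unfold mkw; by_cases h : i = k <;> cases hf : f i <;> simp [h, hf]

lemma mkw_x {m : ℕ} (k : Fin m) (f : Fin m → Bool) (j : ℕ) :
    (wpos m (mkw m k f) j).1 = S m f j := by
  rw [wpos_fst, S]
  congr 1; funext i
  rw [gstep_fst, mkw_f]

lemma mkw_y {m : ℕ} (k : Fin m) (f : Fin m → Bool) (j : ℕ) :
    (wpos m (mkw m k f) j).2 = T m f j - (if (k:ℕ) < j then 1 else 0) := by
  rw [wpos_snd]
  have : (fun i => (gstep (mkw m k f i)).2)
      = fun i => tval (f i) - (if i = k then (1:ℤ) else 0) := by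
    funext i
    rw [gstep_snd, mkw_f, mkw_sp]
    by_cases h : i = k <;> simp [h, tval]
  rw [this, pSum_sub, pSum_indicator, T]

/-- Position formulas for an arbitrary walk. -/
lemma walk_x (m : ℕ) (w : Fin m → Fin 4) (j : ℕ) :
    (wpos m w j).1 = S m (fun i => decide (w i = 1 ∨ w i = 2)) j := by
  rw [wpos_fst, S]; congr 1; funext i; rw [gstep_fst]

lemma walk_y (m : ℕ) (w : Fin m → Fin 4) (j : ℕ) :
    (wpos m w j).2 = T m (fun i => decide (w i = 1 ∨ w i = 2)) j
      - pSum m (fun i => tval (decide (w i = 1 ∨ w i = 3))) j := by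
  rw [wpos_snd, T, ← pSum_sub]
  congr 1; funext i; rw [gstep_snd]

lemma pSum_zero (m : ℕ) (c : Fin m → ℤ) : pSum m c 0 = 0 := by simp [pSum]

def ok (n : ℕ) (f : Fin (2*n+2) → Bool) : Prop :=
  (∀ j, j ≤ 2*n+2 → 0 ≤ S (2*n+2) f j) ∧ T (2*n+2) f (2*n+2) = n+1

def Wk (n : ℕ) := {w : Fin (2*n+2) → Fin 4 //
    (∀ j, 1 ≤ j → j ≤ 2*n+2 → 0 ≤ (wpos (2*n+2) w j).1 ∧ 0 ≤ (wpos (2*n+2) w j).2) ∧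
    wpos (2*n+2) w (2*n+2) = (0, (n : ℤ))}

lemma mkw_valid (n : ℕ) (k : Fin (2*n+2)) (f : Fin (2*n+2) → Bool) (hf : ok n f) :
    (∀ j, 1 ≤ j → j ≤ 2*n+2 → 0 ≤ (wpos (2*n+2) (mkw (2*n+2) k f) j).1 ∧
        0 ≤ (wpos (2*n+2) (mkw (2*n+2) k f) j).2) ∧
    wpos (2*n+2) (mkw (2*n+2) k f) (2*n+2) = (0, (n : ℤ)) := by
  have hT1 : ∀ j, (k:ℕ) < j → j ≤ 2*n+2 → 1 ≤ T (2*n+2) f j := by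
    intro j hk hj
    have h1 : (k:ℕ)+1 ≤ 2*n+2 := k.2
    have h2 := two_mul_T h1 f
    have h3 := hf.1 ((k:ℕ)+1) h1
    have h4 : 1 ≤ T (2*n+2) f ((k:ℕ)+1) := by omega
    exact le_trans h4 (T_mono _ f hk)
  refine ⟨fun j h1 h2 => ⟨?_, ?_⟩, ?_⟩
  · rw [mkw_x]; exact hf.1 j h2
  · rw [mkw_y]
    by_cases hk : (k:ℕ) < j
    · rw [if_pos hk]; have := hT1 j hk h2; omega
    · rw [if_neg hk]; have := T_nonneg (2*n+2) f j; omega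
  · have hS : S (2*n+2) f (2*n+2) = 0 := by
      have := two_mul_T (le_refl (2*n+2)) f
      rw [hf.2] at this; push_cast at this ⊢; omega
    have hy : (wpos (2*n+2) (mkw (2*n+2) k f) (2*n+2)).2 = (n : ℤ) := by
      rw [mkw_y, if_pos k.2, hf.2]; push_cast; ring
    have hx : (wpos (2*n+2) (mkw (2*n+2) k f) (2*n+2)).1 = 0 := by
      rw [mkw_x, hS]
    exact Prod.ext hx hy

def G (n : ℕ) : Fin (2*n+2) × {f : Fin (2*n+2) → Bool // ok n f} → Wk n :=
  fun p => ⟨mkw (2*n+2) p.1 p.2.1, mkw_valid n p.1 p.2.1 p.2.2⟩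

lemma fin4_sp_true : ∀ s : Fin 4, decide (s = 1 ∨ s = 3) = true →
    (if decide (s = 1 ∨ s = 2) = true then (1 : Fin 4) else 3) = s := by decide

lemma fin4_sp_false : ∀ s : Fin 4, decide (s = 1 ∨ s = 3) = false →
    (if decide (s = 1 ∨ s = 2) = true then (2 : Fin 4) else 0) = s := by decide

lemma G_bij (n : ℕ) : Function.Bijective (G n) := by
  constructor
  · rintro ⟨k, f, hf⟩ ⟨k', f', hf'⟩ h
    have hw : mkw (2*n+2) k f = mkw (2*n+2) k' f' := congrArg Subtype.val h
    have hff : f = f' := by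
      funext i
      have := mkw_f k f i
      rw [hw, mkw_f] at this
      exact this.symm
    have hkk : k = k' := by
      have := mkw_sp k f k'
      rw [hw, mkw_sp] at this
      have h2 : k' = k := by simpa using this
      exact h2.symm
    subst hff hkk
    rfl
  · rintro ⟨w, hw1, hw2⟩
    set f : Fin (2*n+2) → Bool := fun i => decide (w i = 1 ∨ w i = 2) with hfdef
    have hx : ∀ j, (wpos (2*n+2) w j).1 = S (2*n+2) f j := fun j => walk_x _ w j
    have hy : ∀ j, (wpos (2*n+2) w j).2 = T (2*n+2) f j
        - pSum (2*n+2) (fun i => tval (decide (w i = 1 ∨ w i = 3))) j := fun j => walk_y _ w j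
    have hxm : (wpos (2*n+2) w (2*n+2)).1 = 0 := by rw [hw2]
    have hym : (wpos (2*n+2) w (2*n+2)).2 = (n : ℤ) := by rw [hw2]
    have hSm : S (2*n+2) f (2*n+2) = 0 := by rw [← hx]; exact hxm
    have hTm : T (2*n+2) f (2*n+2) = n + 1 := by
      have := two_mul_T (le_refl (2*n+2)) f
      rw [hSm] at this; push_cast at this; omega
    have hok : ok n f := by
      refine ⟨fun j hj => ?_, hTm⟩
      rcases Nat.eq_zero_or_pos j with h0 | h0
      · rw [h0, S, pSum_zero]
      · rw [← hx]; exact (hw1 j h0 hj).1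
    -- the special index
    have hsp : pSum (2*n+2) (fun i => tval (decide (w i = 1 ∨ w i = 3))) (2*n+2) = 1 := by
      have := hy (2*n+2); rw [hym, hTm] at this; omega
    have hsp2 : (∑ i : Fin (2*n+2), if (w i = 1 ∨ w i = 3) then (1:ℤ) else 0) = 1 := by
      have he : (∑ i : Fin (2*n+2), if (w i = 1 ∨ w i = 3) then (1:ℤ) else 0)
          = ∑ i : Fin (2*n+2), tval (decide (w i = 1 ∨ w i = 3)) :=
        Finset.sum_congr rfl fun i _ => by
          by_cases h : w i = 1 ∨ w i = 3 <;> simp [h, tval]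
      rw [pSum_full] at hsp
      rw [he, hsp]
    have hcard : (Finset.univ.filter (fun i : Fin (2*n+2) => w i = 1 ∨ w i = 3)).card = 1 := by
      rw [Finset.sum_boole] at hsp2
      exact_mod_cast hsp2
    obtain ⟨k, hk⟩ := Finset.card_eq_one.mp hcard
    have hks : w k = 1 ∨ w k = 3 := by
      have : k ∈ Finset.univ.filter (fun i : Fin (2*n+2) => w i = 1 ∨ w i = 3) := by
        rw [hk]; exact Finset.mem_singleton_self k
      simpa using this
    have hnk : ∀ i, i ≠ k → ¬(w i = 1 ∨ w i = 3) := by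
      intro i hi hcon
      have : i ∈ Finset.univ.filter (fun i : Fin (2*n+2) => w i = 1 ∨ w i = 3) := by
        simp [hcon]
      rw [hk, Finset.mem_singleton] at this
      exact hi this
    refine ⟨⟨k, f, hok⟩, ?_⟩
    apply Subtype.ext
    show mkw (2*n+2) k f = w
    funext i
    unfold mkw
    by_cases h : i = k
    · rw [if_pos h, hfdef]
      subst h
      exact fin4_sp_true (w i) (decide_eq_true hks)
    · rw [if_neg h, hfdef]
      exact fin4_sp_false (w i) (decide_eq_false (hnk i h))

open DyckStep in
lemma count_ofFn {α : Type*} [DecidableEq α] : ∀ {m : ℕ} (g : Fin m → α) (a : α),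
    ((List.ofFn g).count a : ℤ) = ∑ i : Fin m, if g i = a then 1 else 0 := by
  intro m
  induction m with
  | zero => intro g a; simp
  | succ m ih =>
    intro g a
    rw [List.ofFn_succ, List.count_cons, Fin.sum_univ_succ]
    push_cast
    rw [ih]
    rcases eq_or_ne (g 0) a with h | h <;> simp [h, add_comm]

open DyckStep in
lemma count_take_ofFn {α : Type*} [DecidableEq α] {m j : ℕ} (h : j ≤ m) (g : Fin m → α) (a : α) :
    (((List.ofFn g).take j).count a : ℤ) = ∑ i : Fin j, if g (Fin.castLE h i) = a then 1 else 0 := by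
  rw [← Fin.ofFn_take_eq_take_ofFn h g, count_ofFn]
  rfl

open DyckStep

def dlist {m : ℕ} (f : Fin m → Bool) : List DyckStep := List.ofFn fun i => if f i then U else D

lemma dlist_diff {m j : ℕ} (h : j ≤ m) (f : Fin m → Bool) :
    (((dlist f).take j).count U : ℤ) - (((dlist f).take j).count D : ℤ) = S m f j := by
  rw [dlist, count_take_ofFn h, count_take_ofFn h, S, pSum_castLE h, ← Finset.sum_sub_distrib]
  refine Finset.sum_congr rfl fun i _ => ?_
  cases hf : f (Fin.castLE h i) <;> simp [hf, bval]

lemma dlist_countU {m : ℕ} (f : Fin m → Bool) :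
    (((dlist f).count U : ℤ)) = T m f m := by
  rw [dlist, count_ofFn, T, pSum_full]
  refine Finset.sum_congr rfl fun i _ => ?_
  cases hf : f i <;> simp [hf, tval]

lemma dlist_countD {m : ℕ} (f : Fin m → Bool) :
    (((dlist f).count D : ℤ)) = m - T m f m := by
  rw [dlist, count_ofFn, T, pSum_full]
  have h1 : ∀ i, (if (if f i = true then U else D) = D then (1:ℤ) else 0) = 1 - tval (f i) := by
    intro i; cases hf : f i <;> simp [hf, tval]
  simp_rw [h1]
  rw [Finset.sum_sub_distrib]
  simp

lemma dlist_length {m : ℕ} (f : Fin m → Bool) : (dlist f).length = m := by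
  simp [dlist]

lemma dlist_reconstruct (p : DyckWord) {m : ℕ} (hlen : p.toList.length = m) :
    dlist (fun i : Fin m => decide (p.toList.get (Fin.cast hlen.symm i) = U)) = p.toList := by
  refine List.ext_get ?_ fun i h1 h2 => ?_
  · rw [dlist_length, hlen]
  · simp only [dlist]
    rw [List.get_ofFn]
    rcases hs : p.toList.get ⟨i, h2⟩ with _ | _ <;>
      rw [List.get_eq_getElem] at hs <;> simp [hs]

/-- The Dyck word associated to an `ok` function. -/
def toDyck (n : ℕ) (f : Fin (2*n+2) → Bool) (hf : ok n f) : DyckWord where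
  toList := dlist f
  count_U_eq_count_D := by
    have hU := dlist_countU f
    have hD := dlist_countD f
    rw [hf.2] at hU hD
    have : ((dlist f).count U : ℤ) = ((dlist f).count D : ℤ) := by
      rw [hU, hD]; push_cast; ring
    exact_mod_cast this
  count_D_le_count_U := by
    intro j
    rcases le_or_gt j (2*n+2) with h | h
    · have := dlist_diff h f
      have h2 := hf.1 j h
      omega
    · rw [List.take_of_length_le (by rw [dlist_length]; omega)]
      have hU := dlist_countU f
      have hD := dlist_countD f
      rw [hf.2] at hU hD
      have : ((dlist f).count D : ℤ) ≤ ((dlist f).count U : ℤ) := by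
        rw [hU, hD]; push_cast; omega
      exact_mod_cast this

lemma toDyck_semilength (n : ℕ) (f : Fin (2*n+2) → Bool) (hf : ok n f) :
    (toDyck n f hf).semilength = n + 1 := by
  have hU := dlist_countU f
  rw [hf.2] at hU
  have : ((toDyck n f hf).semilength : ℤ) = ((n : ℤ) + 1) := hU
  exact_mod_cast this

def dequiv (n : ℕ) :
    {f : Fin (2*n+2) → Bool // ok n f} ≃ {p : DyckWord // p.semilength = n + 1} where
  toFun x := ⟨toDyck n x.1 x.2, toDyck_semilength n x.1 x.2⟩
  invFun x := by
    refine ⟨fun i => decide (x.1.toList.get (Fin.cast ?_ i) = U), ?_⟩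
    · rw [← x.1.two_mul_semilength_eq_length, x.2]; ring
    · have hlen : x.1.toList.length = 2*n+2 := by
        rw [← x.1.two_mul_semilength_eq_length, x.2]; ring
      have hrec := dlist_reconstruct x.1 hlen
      constructor
      · intro j hj
        have := dlist_diff hj (fun i : Fin (2*n+2) => decide (x.1.toList.get (Fin.cast hlen.symm i) = U))
        rw [hrec] at this
        rw [← this]
        have := x.1.count_D_le_count_U j
        omega
      · have hU := dlist_countU (fun i : Fin (2*n+2) => decide (x.1.toList.get (Fin.cast hlen.symm i) = U))
        rw [hrec] at hU
        rw [← hU]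
        have : x.1.toList.count U = n + 1 := x.2
        rw [this]
        push_cast; ring
  left_inv := by
    rintro ⟨f, hf⟩
    apply Subtype.ext
    funext i
    simp only [List.get_eq_getElem, Fin.coe_cast]
    show decide ((dlist f)[(i:ℕ)]'(by rw [dlist_length]; exact i.2) = U) = f i
    simp only [dlist, List.getElem_ofFn]
    cases hfi : f i with
    | false => simp [hfi]
    | true => simp [hfi]
  right_inv := by
    rintro ⟨p, hp⟩
    apply Subtype.ext
    apply DyckWord.ext
    exact dlist_reconstruct p (by rw [← p.two_mul_semilength_eq_length, hp]; ring)

end Gaux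

theorem gessel_count_aux (n : ℕ) :
    gesselF (2 * n + 2) 0 (n : ℤ) = (2 * n + 2) * catalan (n + 1) := by
  have h1 : gesselF (2*n+2) 0 (n : ℤ) = Nat.card (Gaux.Wk n) := rfl
  rw [h1, ← Nat.card_congr (Equiv.ofBijective _ (Gaux.G_bij n)),
    Nat.card_prod, Nat.card_congr (Gaux.dequiv n), Nat.card_eq_fintype_card,
    Nat.card_eq_fintype_card, DyckWord.card_dyckWord_semilength_eq_catalan,
    Fintype.card_fin]

theorem gessel_C2_k1 (n : ℕ) :
    (n + 2) * gesselF (2 * n + 2) 0 (n : ℤ) = (2 * n + 2) * (2 * n + 2).choose (n + 1) := by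
  rw [gessel_count_aux]
  have h2 : (n + 2) * catalan (n + 1) = Nat.centralBinom (n + 1) :=
    succ_mul_catalan_eq_centralBinom (n + 1)
  have h3 : Nat.centralBinom (n + 1) = (2 * n + 2).choose (n + 1) := by
    have h4 : 2 * (n + 1) = 2 * n + 2 := by omega
    rw [Nat.centralBinom, h4]
  calc (n + 2) * ((2 * n + 2) * catalan (n + 1))
      = (2 * n + 2) * ((n + 2) * catalan (n + 1)) := by ring
    _ = (2 * n + 2) * (2 * n + 2).choose (n + 1) := by rw [h2, h3]
end

section
/- For all n ≥ 0, F(n+2; n, 0) = (1/2)·(n+1)·(n+4), where F counts Gessel walks of length n+2 from the origin to (n, 0). -/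
open Finset

namespace GesselAux

def wA (m : ℕ) (k : Fin m) : Fin m → Fin 4 := fun i => if i = k then 0 else 1
def wB (m : ℕ) (j k : Fin m) : Fin m → Fin 4 :=
  fun i => if i = j then 2 else if i = k then 3 else 1

def FF (m j : ℕ) : Finset (Fin m) := univ.filter fun i => (i : ℕ) < j

lemma mem_FF {m j : ℕ} {i : Fin m} : i ∈ FF m j ↔ (i : ℕ) < j := by simp [FF]

lemma card_FF {m j : ℕ} (h : j ≤ m) : (FF m j).card = j := by
  have he : FF m j = (Finset.range j).attachFin
      (fun x hx => lt_of_lt_of_le (mem_range.mp hx) h) := by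
    ext i; simp [FF, Finset.mem_attachFin]
  rw [he, Finset.card_attachFin, Finset.card_range]

lemma wpos_eq (m : ℕ) (w : Fin m → Fin 4) (j : ℕ) :
    wpos m w j = ∑ i ∈ FF m j, gstep (w i) := (Finset.sum_filter _ _).symm

lemma fst_wpos (m : ℕ) (w : Fin m → Fin 4) (j : ℕ) :
    (wpos m w j).1 = ∑ i ∈ FF m j, (gstep (w i)).1 := by
  rw [wpos_eq]; exact Prod.fst_sum

lemma snd_wpos (m : ℕ) (w : Fin m → Fin 4) (j : ℕ) :
    (wpos m w j).2 = ∑ i ∈ FF m j, (gstep (w i)).2 := by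
  rw [wpos_eq]; exact Prod.snd_sum

lemma fst_wA {m : ℕ} (k : Fin m) {j : ℕ} (hj : j ≤ m) :
    (wpos m (wA m k) j).1 = (j : ℤ) + (if (k : ℕ) < j then -2 else 0) := by
  rw [fst_wpos]
  have hpt : ∀ i : Fin m, (gstep (wA m k i)).1 = 1 + (if i = k then (-2 : ℤ) else 0) := by
    intro i
    by_cases h : i = k <;> simp [wA, h, gstep]
  calc ∑ i ∈ FF m j, (gstep (wA m k i)).1
      = ∑ i ∈ FF m j, (1 + (if i = k then (-2 : ℤ) else 0)) := by
        exact Finset.sum_congr rfl fun i _ => hpt i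
    _ = (j : ℤ) + (if (k : ℕ) < j then -2 else 0) := by
        rw [Finset.sum_add_distrib, Finset.sum_const, Finset.sum_ite_eq', card_FF hj]
        simp [mem_FF]

lemma snd_wA {m : ℕ} (k : Fin m) (j : ℕ) : (wpos m (wA m k) j).2 = 0 := by
  rw [snd_wpos]
  refine Finset.sum_eq_zero fun i _ => ?_
  by_cases h : i = k <;> simp [wA, h, gstep]

lemma fst_wB {m : ℕ} {j0 k0 : Fin m} (hne : j0 ≠ k0) {j : ℕ} (hj : j ≤ m) :
    (wpos m (wB m j0 k0) j).1 = (j : ℤ) + (if (k0 : ℕ) < j then -2 else 0) := by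
  rw [fst_wpos]
  have hpt : ∀ i : Fin m, (gstep (wB m j0 k0 i)).1 = 1 + (if i = k0 then (-2 : ℤ) else 0) := by
    intro i
    by_cases h1 : i = j0
    · subst h1; simp [wB, hne, gstep]
    · by_cases h2 : i = k0 <;> simp [wB, h1, h2, Ne.symm hne, gstep]
  calc ∑ i ∈ FF m j, (gstep (wB m j0 k0 i)).1
      = ∑ i ∈ FF m j, (1 + (if i = k0 then (-2 : ℤ) else 0)) :=
        Finset.sum_congr rfl fun i _ => hpt i
    _ = (j : ℤ) + (if (k0 : ℕ) < j then -2 else 0) := by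
        rw [Finset.sum_add_distrib, Finset.sum_const, Finset.sum_ite_eq', card_FF hj]
        simp [mem_FF]

lemma snd_wB {m : ℕ} {j0 k0 : Fin m} (hne : j0 ≠ k0) (j : ℕ) :
    (wpos m (wB m j0 k0) j).2 =
      (if (j0 : ℕ) < j then 1 else 0) + (if (k0 : ℕ) < j then -1 else 0) := by
  rw [snd_wpos]
  have hpt : ∀ i : Fin m, (gstep (wB m j0 k0 i)).2 =
      (if i = j0 then (1 : ℤ) else 0) + (if i = k0 then (-1 : ℤ) else 0) := by
    intro i
    by_cases h1 : i = j0
    · subst h1; simp [wB, hne, gstep]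
    · by_cases h2 : i = k0 <;> simp [wB, h1, h2, Ne.symm hne, gstep]
  calc ∑ i ∈ FF m j, (gstep (wB m j0 k0 i)).2
      = ∑ i ∈ FF m j, ((if i = j0 then (1 : ℤ) else 0) + (if i = k0 then (-1 : ℤ) else 0)) :=
        Finset.sum_congr rfl fun i _ => hpt i
    _ = _ := by
        rw [Finset.sum_add_distrib, Finset.sum_ite_eq', Finset.sum_ite_eq']
        simp [mem_FF]

end GesselAux

namespace GesselAux

/-- Predicate for a valid Gessel walk of length n+2 ending at (n,0). -/
def P (n : ℕ) (w : Fin (n + 2) → Fin 4) : Prop :=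
  (∀ j, 1 ≤ j → j ≤ n + 2 → 0 ≤ (wpos (n + 2) w j).1 ∧ 0 ≤ (wpos (n + 2) w j).2) ∧
    wpos (n + 2) w (n + 2) = ((n : ℤ), 0)

lemma valid_wA {n : ℕ} (k : Fin (n + 2)) (hk : k ≠ 0) : P n (wA (n + 2) k) := by
  constructor
  · intro j h1 h2
    rw [fst_wA k h2, snd_wA]
    refine ⟨?_, le_refl 0⟩
    have hk1 : 1 ≤ (k : ℕ) := by
      rcases Nat.eq_zero_or_pos (k : ℕ) with h | h
      · exact absurd (Fin.ext h) hk
      · exact h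
    split <;> push_cast <;> omega
  · have h2 : n + 2 ≤ n + 2 := le_refl _
    have := fst_wA k h2
    have h3 := snd_wA k (n + 2)
    refine Prod.ext ?_ ?_
    · rw [this, if_pos k.isLt]; push_cast; ring
    · rw [h3]

lemma valid_wB {n : ℕ} {j0 k0 : Fin (n + 2)} (h : j0 < k0) : P n (wB (n + 2) j0 k0) := by
  have hne : j0 ≠ k0 := Fin.ne_of_lt h
  have hv : (j0 : ℕ) < (k0 : ℕ) := h
  constructor
  · intro j h1 h2
    rw [fst_wB hne h2, snd_wB hne]
    constructor <;> split_ifs <;> push_cast <;> omega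
  · refine Prod.ext ?_ ?_
    · rw [fst_wB hne (le_refl _), if_pos k0.isLt]; push_cast; ring
    · rw [snd_wB hne, if_pos j0.isLt, if_pos k0.isLt]; ring

end GesselAux

namespace GesselAux

lemma fst_counts {m : ℕ} (w : Fin m → Fin 4) :
    (wpos m w m).1 =
      ((univ.filter fun i => w i = 1).card : ℤ) + (univ.filter fun i => w i = 2).card
        - (univ.filter fun i => w i = 0).card - (univ.filter fun i => w i = 3).card := by
  have hFF : FF m m = univ := by ext i; simp [mem_FF, i.isLt]
  rw [fst_wpos, hFF]
  have hpt : ∀ x : Fin 4, (gstep x).1 =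
      (if x = 1 then (1:ℤ) else 0) + (if x = 2 then 1 else 0)
        - (if x = 0 then 1 else 0) - (if x = 3 then 1 else 0) := by decide
  calc ∑ i : Fin m, (gstep (w i)).1
      = ∑ i : Fin m, ((if w i = 1 then (1:ℤ) else 0) + (if w i = 2 then 1 else 0)
        - (if w i = 0 then 1 else 0) - (if w i = 3 then 1 else 0)) :=
        Finset.sum_congr rfl fun i _ => hpt (w i)
    _ = _ := by
        rw [Finset.sum_sub_distrib, Finset.sum_sub_distrib, Finset.sum_add_distrib,
          Finset.sum_boole, Finset.sum_boole, Finset.sum_boole, Finset.sum_boole]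

lemma snd_counts {m : ℕ} (w : Fin m → Fin 4) :
    (wpos m w m).2 =
      ((univ.filter fun i => w i = 2).card : ℤ) - (univ.filter fun i => w i = 3).card := by
  have hFF : FF m m = univ := by ext i; simp [mem_FF, i.isLt]
  rw [snd_wpos, hFF]
  have hpt : ∀ x : Fin 4, (gstep x).2 =
      (if x = 2 then (1:ℤ) else 0) - (if x = 3 then 1 else 0) := by decide
  calc ∑ i : Fin m, (gstep (w i)).2
      = ∑ i : Fin m, ((if w i = 2 then (1:ℤ) else 0) - (if w i = 3 then 1 else 0)) :=
        Finset.sum_congr rfl fun i _ => hpt (w i)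
    _ = _ := by rw [Finset.sum_sub_distrib, Finset.sum_boole, Finset.sum_boole]

lemma total_counts {m : ℕ} (w : Fin m → Fin 4) :
    (univ.filter fun i => w i = 0).card + (univ.filter fun i => w i = 1).card
      + (univ.filter fun i => w i = 2).card + (univ.filter fun i => w i = 3).card = m := by
  have := Finset.card_eq_sum_card_fiberwise
    (f := w) (s := (univ : Finset (Fin m))) (t := (univ : Finset (Fin 4)))
    (fun x _ => mem_univ (w x))
  rw [Finset.card_univ, Fintype.card_fin, Fin.sum_univ_four] at this
  omega

lemma classify {n : ℕ} {w : Fin (n + 2) → Fin 4} (hw : P n w) :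
    (∃ k : Fin (n + 2), k ≠ 0 ∧ w = wA (n + 2) k) ∨
      (∃ j0 k0 : Fin (n + 2), j0 < k0 ∧ w = wB (n + 2) j0 k0) := by
  obtain ⟨hpos, hend⟩ := hw
  have h1 := fst_counts w
  have h2 := snd_counts w
  have h3 := total_counts w
  rw [hend] at h1 h2
  simp only at h1 h2
  set a := (univ.filter fun i => w i = 0).card with ha
  set b := (univ.filter fun i => w i = 1).card with hb
  set c := (univ.filter fun i => w i = 2).card with hc
  set d := (univ.filter fun i => w i = 3).card with hd
  have hcd : c = d := by omega
  have hac : a + c = 1 := by omega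
  -- helper : for x : Fin 4
  have hfin : ∀ x : Fin 4, x ≠ 0 → x ≠ 2 → x ≠ 3 → x = 1 := by decide
  rcases Nat.eq_zero_or_pos a with haz | hap
  · -- case B : a = 0, c = 1, d = 1
    right
    have hc1 : c = 1 := by omega
    have hd1 : d = 1 := by omega
    obtain ⟨j0, hj0⟩ := Finset.card_eq_one.mp hc1.symm.symm
    obtain ⟨k0, hk0⟩ := Finset.card_eq_one.mp hd1
    have hwj0 : w j0 = 2 := by
      have : j0 ∈ univ.filter fun i => w i = 2 := by rw [hj0]; exact mem_singleton_self _
      simpa using this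
    have hwk0 : w k0 = 3 := by
      have : k0 ∈ univ.filter fun i => w i = 3 := by rw [hk0]; exact mem_singleton_self _
      simpa using this
    have haf : (univ.filter fun i => w i = 0) = ∅ := Finset.card_eq_zero.mp haz
    have hwB : w = wB (n+2) j0 k0 := by
      funext i
      by_cases e1 : i = j0
      · subst e1; simp [wB, hwj0]
      · by_cases e2 : i = k0
        · subst e2; simp [wB, e1, hwk0]
        · have h0 : w i ≠ 0 := by
            intro h; have : i ∈ univ.filter fun i => w i = 0 := by simp [h]
            rw [haf] at this; exact absurd this (notMem_empty i)
          have hI2 : w i ≠ 2 := by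
            intro h; have : i ∈ univ.filter fun i => w i = 2 := by simp [h]
            rw [hj0] at this; exact e1 (mem_singleton.mp this)
          have hI3 : w i ≠ 3 := by
            intro h; have : i ∈ univ.filter fun i => w i = 3 := by simp [h]
            rw [hk0] at this; exact e2 (mem_singleton.mp this)
          simp [wB, e1, e2, hfin _ h0 hI2 hI3]
    have hne : j0 ≠ k0 := by intro h; rw [h, hwk0] at hwj0; exact absurd hwj0 (by decide)
    refine ⟨j0, k0, ?_, hwB⟩
    by_contra hlt
    have hkj : (k0 : ℕ) < (j0 : ℕ) := by
      have hx1 : ¬ (j0 : ℕ) < (k0 : ℕ) := fun h => hlt (Fin.lt_def.mpr h)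
      have hx2 : (j0 : ℕ) ≠ (k0 : ℕ) := fun e => hne (Fin.ext e)
      omega
    have hvk := (hpos ((k0 : ℕ) + 1) (by omega) (by have := k0.isLt; omega)).2
    rw [hwB, snd_wB hne] at hvk
    rw [if_neg (by omega), if_pos (by omega)] at hvk
    omega
  · -- case A : a = 1, c = 0, d = 0
    left
    have ha1 : a = 1 := by omega
    have hc0 : c = 0 := by omega
    have hd0 : d = 0 := by omega
    obtain ⟨k, hkf⟩ := Finset.card_eq_one.mp ha1
    have hwk : w k = 0 := by
      have : k ∈ univ.filter fun i => w i = 0 := by rw [hkf]; exact mem_singleton_self _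
      simpa using this
    have hcf : (univ.filter fun i => w i = 2) = ∅ := Finset.card_eq_zero.mp hc0
    have hdf : (univ.filter fun i => w i = 3) = ∅ := Finset.card_eq_zero.mp hd0
    have hwA : w = wA (n+2) k := by
      funext i
      by_cases e : i = k
      · subst e; simp [wA, hwk]
      · have h0 : w i ≠ 0 := by
          intro h; have : i ∈ univ.filter fun i => w i = 0 := by simp [h]
          rw [hkf] at this; exact e (mem_singleton.mp this)
        have hI2 : w i ≠ 2 := by
          intro h; have : i ∈ univ.filter fun i => w i = 2 := by simp [h]
          rw [hcf] at this; exact absurd this (notMem_empty i)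
        have hI3 : w i ≠ 3 := by
          intro h; have : i ∈ univ.filter fun i => w i = 3 := by simp [h]
          rw [hdf] at this; exact absurd this (notMem_empty i)
        simp [wA, e, hfin _ h0 hI2 hI3]
    refine ⟨k, ?_, hwA⟩
    intro hk0
    have hv := (hpos 1 (le_refl 1) (by omega)).1
    rw [hwA, fst_wA k (by omega : 1 ≤ n+2)] at hv
    rw [hk0] at hv
    simp at hv

end GesselAux

namespace GesselAux

lemma wA_inj {m : ℕ} {k k' : Fin m} (h : wA m k = wA m k') : k = k' := by
  by_contra e
  have hx := congrFun h k
  simp [wA, e] at hx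

lemma wB_inj {m : ℕ} {j1 k1 j2 k2 : Fin m} (h1 : j1 < k1) (h2 : j2 < k2)
    (h : wB m j1 k1 = wB m j2 k2) : j1 = j2 ∧ k1 = k2 := by
  have e1 : j1 = j2 := by
    by_contra e
    have hx := congrFun h j1
    simp only [wB, if_pos rfl, if_neg e] at hx
    split_ifs at hx <;> exact absurd hx (by decide)
  have e2 : k1 = k2 := by
    by_contra e
    have hx := congrFun h k1
    have hne1 : k1 ≠ j1 := (Fin.ne_of_lt h1).symm
    have hne2 : k1 ≠ j2 := e1 ▸ hne1
    simp only [wB, if_neg hne1, if_pos rfl, if_neg hne2, if_neg e] at hx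
    exact absurd hx (by decide)
  exact ⟨e1, e2⟩

lemma wA_ne_wB {m : ℕ} {k j1 k1 : Fin m} : wA m k ≠ wB m j1 k1 := by
  intro h'
  have hx := congrFun h' j1
  simp only [wB, if_pos rfl, wA] at hx
  split_ifs at hx <;> exact absurd hx (by decide)

noncomputable def Phi (n : ℕ) :
    ({k : Fin (n + 2) // k ≠ 0} ⊕ {p : Fin (n + 2) × Fin (n + 2) // p.1 < p.2}) →
      {w : Fin (n + 2) → Fin 4 // P n w}
  | Sum.inl ⟨k, hk⟩ => ⟨wA (n + 2) k, valid_wA k hk⟩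
  | Sum.inr ⟨p, hp⟩ => ⟨wB (n + 2) p.1 p.2, valid_wB hp⟩

lemma Phi_bij (n : ℕ) : Function.Bijective (Phi n) := by
  constructor
  · rintro (⟨k, hk⟩ | ⟨⟨j1, k1⟩, hp⟩) (⟨k', hk'⟩ | ⟨⟨j2, k2⟩, hp'⟩) h
    · simp only [Phi, Subtype.mk.injEq] at h
      simp [wA_inj h]
    · simp only [Phi, Subtype.mk.injEq] at h
      exact absurd h wA_ne_wB
    · simp only [Phi, Subtype.mk.injEq] at h
      exact absurd h.symm wA_ne_wB
    · simp only [Phi, Subtype.mk.injEq] at h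
      obtain ⟨e1, e2⟩ := wB_inj hp hp' h
      simp only at e1 e2
      simp [e1, e2]
  · rintro ⟨w, hw⟩
    rcases classify hw with ⟨k, hk, rfl⟩ | ⟨j0, k0, hlt, rfl⟩
    · exact ⟨Sum.inl ⟨k, hk⟩, Subtype.ext rfl⟩
    · exact ⟨Sum.inr ⟨(j0, k0), hlt⟩, Subtype.ext rfl⟩

def eB (m : ℕ) : {p : Fin m × Fin m // p.1 < p.2} ≃ Σ k : Fin m, Fin (k : ℕ) where
  toFun := fun x => ⟨x.1.2, ⟨(x.1.1 : ℕ), x.2⟩⟩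
  invFun := fun x => ⟨(⟨(x.2 : ℕ), lt_trans x.2.isLt x.1.isLt⟩, x.1), x.2.isLt⟩
  left_inv := fun x => by
    ext <;> simp
  right_inv := fun x => by
    ext <;> simp

lemma cardA (n : ℕ) : Nat.card {k : Fin (n + 2) // k ≠ 0} = n + 1 := by
  rw [Nat.card_eq_fintype_card, Fintype.card_subtype_compl, Fintype.card_fin,
    Fintype.card_subtype_eq]
  omega

lemma cardB (n : ℕ) :
    2 * Nat.card {p : Fin (n + 2) × Fin (n + 2) // p.1 < p.2} = (n + 2) * (n + 1) := by
  rw [Nat.card_congr (eB (n + 2)), Nat.card_eq_fintype_card, Fintype.card_sigma]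
  simp only [Fintype.card_fin]
  rw [Fin.sum_univ_eq_sum_range (fun i => i) (n + 2)]
  have h2 := Finset.sum_range_id_mul_two (n + 2)
  have h3 : n + 2 - 1 = n + 1 := rfl
  rw [h3] at h2
  rw [mul_comm, h2]

end GesselAux

open GesselAux in
theorem gessel_C4_k1 (n : ℕ) :
    2 * gesselF (n + 2) (n : ℤ) 0 = (n + 1) * (n + 4) := by
  have h1 : gesselF (n + 2) (n : ℤ) 0 = Nat.card {w : Fin (n + 2) → Fin 4 // P n w} := rfl
  rw [h1, Nat.card_congr (Equiv.ofBijective _ (Phi_bij n)).symm, Nat.card_sum, Nat.mul_add,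
    cardA n, cardB n]
  ring
end
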